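/- arXiv:2501.00849 — 6 statements merged into one kernel-verified Lean document; each statement's English description precedes it below -/
import Mathlib

section
/- Let δ ≥ 0 and 1 < p⁻ ≤ p⁺ < ∞. There exists a constant c ≥ 1, depending only on p⁻, p⁺ and δ, such that for every exponent p ∈ [p⁻, p⁺], every shift a ≥ 0 and every r ≥ 0 one has c⁻¹ (δ + a + r)^{p−2} r² ≤ (φ_p)_a(r) ≤ c (δ + a + r)^{p−2} r². -/
/-! For `p ≥ 1` and `b = δ + a ≥ 0` the integrand `g s = (b+s)^{p-2} s` is increasing on
`[0, ∞)`, being the product of the nonnegative increasing functions `(b+s)^{p-1}` and `s/(b+s)`.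
Hence `φ(r) ≤ r g(r) = (b+r)^{p-2} r²` and `φ(r) ≥ (r/2) g(r/2) = (b+r/2)^{p-2} r²/4`, and since
`b + r/2` lies between `(b+r)/2` and `b+r`, `(b+r/2)^{p-2} ≥ 2^{-p⁺} (b+r)^{p-2}`. -/

open MeasureTheory

/-- The shifted N-function `(φ_p)_a(r) = ∫₀^r (δ+a+s)^{p-2} s ds`. -/
noncomputable def phiShift (δ p a r : ℝ) : ℝ :=
  ∫ s in (0:ℝ)..r, (δ + a + s) ^ (p - 2) * s

open Set Real

lemma rpow_sub_two_mul_eq {b t : ℝ} (p : ℝ) (hb : 0 ≤ b) (ht : 0 ≤ t) :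
    (b + t) ^ (p - 2) * t = (b + t) ^ (p - 1) * (t / (b + t)) := by
  rcases (add_nonneg hb ht).eq_or_lt with h | h
  · obtain rfl : t = 0 := by linarith
    simp
  · rw [show p - 2 = (p - 1) - 1 by ring, rpow_sub_one h.ne']
    ring

lemma div_add_le_div_add {b s t : ℝ} (hb : 0 ≤ b) (hs : 0 ≤ s) (hst : s ≤ t) :
    s / (b + s) ≤ t / (b + t) := by
  rcases hs.eq_or_lt with rfl | hs
  · simp only [zero_div]
    exact div_nonneg (hs.trans hst) (by linarith)
  · rw [div_le_div_iff₀ (by linarith) (by linarith)]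
    nlinarith

lemma monotoneOn_rpow_sub_two_mul {b p : ℝ} (hb : 0 ≤ b) (hp : 1 ≤ p) :
    MonotoneOn (fun t => (b + t) ^ (p - 2) * t) (Ici 0) := by
  intro s hs t ht hst
  simp only [rpow_sub_two_mul_eq p hb hs, rpow_sub_two_mul_eq p hb ht]
  have hbs : 0 ≤ b + s := add_nonneg hb hs
  exact mul_le_mul (rpow_le_rpow hbs (by linarith) (by linarith))
    (div_add_le_div_add hb hs hst) (div_nonneg hs hbs)
    (rpow_nonneg (hbs.trans (by linarith)) _)

lemma intervalIntegrable_rpow_sub_two_mul {b p u v : ℝ} (hb : 0 ≤ b) (hp : 1 ≤ p)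
    (hu : 0 ≤ u) (hv : 0 ≤ v) :
    IntervalIntegrable (fun t => (b + t) ^ (p - 2) * t) volume u v :=
  ((monotoneOn_rpow_sub_two_mul hb hp).mono fun _ hx =>
    (le_min hu hv).trans hx.1).intervalIntegrable

lemma phiShift_le {δ p a r : ℝ} (hδa : 0 ≤ δ + a) (hp : 1 ≤ p) (hr : 0 ≤ r) :
    phiShift δ p a r ≤ (δ + a + r) ^ (p - 2) * r ^ 2 := by
  calc phiShift δ p a r ≤ ∫ _ in (0:ℝ)..r, (δ + a + r) ^ (p - 2) * r :=
        intervalIntegral.integral_mono_on hr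
          (intervalIntegrable_rpow_sub_two_mul hδa hp le_rfl hr) intervalIntegrable_const
          fun s hs => monotoneOn_rpow_sub_two_mul hδa hp hs.1 hr hs.2
    _ = (δ + a + r) ^ (p - 2) * r ^ 2 := by
        rw [intervalIntegral.integral_const, smul_eq_mul]
        ring

lemma two_rpow_neg_mul_rpow_le_rpow {x y q Q : ℝ} (hy : 0 < y) (hyx : y / 2 ≤ x)
    (hxy : x ≤ y) (hqQ : q ≤ Q) (hQ : 0 ≤ Q) :
    2 ^ (-Q) * y ^ q ≤ x ^ q := by
  have hx : 0 < x := by linarith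
  rcases le_total 0 q with hq | hq
  · calc 2 ^ (-Q) * y ^ q ≤ 2 ^ (-q) * y ^ q := by
          gcongr
          linarith
      _ = (y / 2) ^ q := by
          rw [div_rpow hy.le zero_le_two, rpow_neg zero_le_two]
          ring
      _ ≤ x ^ q := rpow_le_rpow (by positivity) hyx hq
  · calc 2 ^ (-Q) * y ^ q ≤ 1 * y ^ q := by
          gcongr
          exact rpow_le_one_of_one_le_of_nonpos one_le_two (by linarith)
      _ ≤ x ^ q := by
          rw [one_mul]
          exact rpow_le_rpow_of_nonpos hx hxy hq

lemma phiShift_ge {δ p a r Q : ℝ} (hδa : 0 ≤ δ + a) (hp : 1 ≤ p) (hr : 0 ≤ r)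
    (hpQ : p - 2 ≤ Q) (hQ : 0 ≤ Q) :
    2 ^ (-Q) / 4 * ((δ + a + r) ^ (p - 2) * r ^ 2) ≤ phiShift δ p a r := by
  rcases hr.eq_or_lt with rfl | hr
  · simp [phiShift]
  set g := fun t => (δ + a + t) ^ (p - 2) * t
  have hmono := monotoneOn_rpow_sub_two_mul hδa hp
  have hint : ∀ {u v}, 0 ≤ u → 0 ≤ v → IntervalIntegrable g volume u v :=
    intervalIntegrable_rpow_sub_two_mul hδa hp
  have hhalf : 0 ≤ r / 2 := by positivity
  have hfirst : 0 ≤ ∫ t in (0:ℝ)..(r / 2), g t :=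
    intervalIntegral.integral_nonneg hhalf fun t ht =>
      mul_nonneg (rpow_nonneg (by linarith [ht.1]) _) ht.1
  have hsecond : ∫ _ in (r / 2)..r, g (r / 2) ≤ ∫ t in (r / 2)..r, g t :=
    intervalIntegral.integral_mono_on (by linarith) intervalIntegrable_const
      (hint hhalf hr.le) fun t ht => hmono hhalf (hhalf.trans ht.1) ht.1
  have hbase : 2 ^ (-Q) * (δ + a + r) ^ (p - 2) ≤ (δ + a + r / 2) ^ (p - 2) :=
    two_rpow_neg_mul_rpow_le_rpow (by linarith) (by linarith) (by linarith) hpQ hQ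
  calc 2 ^ (-Q) / 4 * ((δ + a + r) ^ (p - 2) * r ^ 2)
      = 2 ^ (-Q) * (δ + a + r) ^ (p - 2) * (r / 2) * (r / 2) := by ring
    _ ≤ (δ + a + r / 2) ^ (p - 2) * (r / 2) * (r / 2) := by gcongr
    _ = ∫ _ in (r / 2)..r, g (r / 2) := by
        rw [intervalIntegral.integral_const, smul_eq_mul]
        ring
    _ ≤ (∫ t in (0:ℝ)..(r / 2), g t) + ∫ t in (r / 2)..r, g t := by linarith
    _ = phiShift δ p a r :=
        intervalIntegral.integral_add_adjacent_intervals (hint le_rfl hhalf) (hint hhalf hr.le)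

theorem stmt0 (δ pm pp : ℝ) (hδ : 0 ≤ δ) (hpm : 1 < pm) (hpmpp : pm ≤ pp) :
    ∃ c : ℝ, 1 ≤ c ∧ ∀ p : ℝ, pm ≤ p → p ≤ pp → ∀ a : ℝ, 0 ≤ a → ∀ r : ℝ, 0 ≤ r →
      c⁻¹ * ((δ + a + r) ^ (p - 2) * r ^ 2) ≤ phiShift δ p a r ∧
      phiShift δ p a r ≤ c * ((δ + a + r) ^ (p - 2) * r ^ 2) := by
  have hpp : 0 ≤ pp := by linarith
  have hc : 1 ≤ 4 * (2:ℝ) ^ pp := by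
    nlinarith [one_le_rpow one_le_two hpp]
  refine ⟨4 * 2 ^ pp, hc, fun p hpmp hppp a ha r hr => ?_⟩
  have hδa : 0 ≤ δ + a := add_nonneg hδ ha
  have hp : 1 ≤ p := by linarith
  have hX : 0 ≤ (δ + a + r) ^ (p - 2) * r ^ 2 := by positivity
  constructor
  · calc (4 * (2:ℝ) ^ pp)⁻¹ * ((δ + a + r) ^ (p - 2) * r ^ 2)
        = 2 ^ (-pp) / 4 * ((δ + a + r) ^ (p - 2) * r ^ 2) := by
          rw [rpow_neg zero_le_two]
          ring
      _ ≤ phiShift δ p a r := phiShift_ge hδa hp hr (by linarith) hpp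
  · exact (phiShift_le hδa hp hr).trans (le_mul_of_one_le_left hX hc)
end

section
/- Let δ ≥ 0 and 1 < p⁻ ≤ p⁺ < ∞. There exists a constant c ≥ 1, depending only on p⁻, p⁺ and δ, such that for every exponent p ∈ [p⁻, p⁺] with conjugate p' := p/(p−1), every shift a ≥ 0 and every r ≥ 0 one has c⁻¹ ((δ + a)^{p−1} + r)^{p'−2} r² ≤ ((φ_p)_a)*(r) ≤ c ((δ + a)^{p−1} + r)^{p'−2} r². -/
open MeasureTheory

/-- The Fenchel conjugate `ψ*(r) = sup_{s ≥ 0} (r·s − ψ(s))`. -/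
noncomputable def fconj (ψ : ℝ → ℝ) (r : ℝ) : ℝ :=
  ⨆ s : NNReal, (r * (s : ℝ) - ψ (s : ℝ))


open Real


lemma rpow_sub_one_mul {x : ℝ} (hx : x ≠ 0) (α : ℝ) : x ^ (α - 1) * x = x ^ α := by
  rw [← Real.rpow_add_one hx, sub_add_cancel]

-- L1: α ≥ 1 upper
lemma pd_L1 {x y α : ℝ} (hy : 0 ≤ y) (hyx : y ≤ x) (hα : 1 ≤ α) :
    x ^ α - y ^ α ≤ α * x ^ (α - 1) * (x - y) := by
  rcases eq_or_lt_of_le (hy.trans hyx) with hx | hx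
  · have : y = 0 := le_antisymm (hyx.trans_eq hx.symm) hy
    subst this; rw [← hx]; simp
  set t := y / x with ht
  have hx0 : x ≠ 0 := hx.ne'
  have htm : -1 ≤ t - 1 := by
    have : 0 ≤ t := div_nonneg hy hx.le
    linarith
  have hb := one_add_mul_self_le_rpow_one_add htm hα
  rw [add_sub_cancel] at hb
  have hty : t ^ α * x ^ α = y ^ α := by
    rw [← Real.mul_rpow (div_nonneg hy hx.le) hx.le, div_mul_cancel₀ _ hx0]
  have hxα : 0 < x ^ α := Real.rpow_pos_of_pos hx α
  have h2 : (1 + α * (t - 1)) * x ^ α ≤ y ^ α := by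
    calc (1 + α * (t - 1)) * x ^ α ≤ t ^ α * x ^ α := by nlinarith
    _ = y ^ α := hty
  have hxx : x ^ (α - 1) * x = x ^ α := rpow_sub_one_mul hx0 α
  have hxy : x ^ (α - 1) * y = t * x ^ α := by
    rw [← hxx, ht]; field_simp
  nlinarith [hxα, Real.rpow_nonneg hx.le (α - 1)]

-- L2: α ≥ 1 lower
lemma pd_L2 {x y α : ℝ} (hy : 0 ≤ y) (hyx : y ≤ x) (hα : 1 ≤ α) :
    x ^ (α - 1) * (x - y) ≤ x ^ α - y ^ α := by
  rcases eq_or_lt_of_le (hy.trans hyx) with hx | hx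
  · have : y = 0 := le_antisymm (hyx.trans_eq hx.symm) hy
    subst this; rw [← hx]; simp
  have hxx : x ^ (α - 1) * x = x ^ α := rpow_sub_one_mul hx.ne' α
  have hyα : y ^ α ≤ y * x ^ (α - 1) := by
    rcases eq_or_lt_of_le hy with h0 | h0
    · rw [← h0, Real.zero_rpow (by linarith : α ≠ 0), zero_mul]
    · calc y ^ α = y ^ (α - 1) * y := (rpow_sub_one_mul h0.ne' α).symm
      _ ≤ x ^ (α - 1) * y :=
          mul_le_mul_of_nonneg_right (Real.rpow_le_rpow h0.le hyx (by linarith)) h0.le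
      _ = y * x ^ (α - 1) := by ring
  nlinarith [Real.rpow_nonneg hx.le (α - 1)]

-- L3: α ≤ 1 upper
lemma pd_L3 {x y α : ℝ} (hy : 0 ≤ y) (hyx : y ≤ x) (hα0 : 0 < α) (hα : α ≤ 1) :
    x ^ α - y ^ α ≤ x ^ (α - 1) * (x - y) := by
  rcases eq_or_lt_of_le (hy.trans hyx) with hx | hx
  · have : y = 0 := le_antisymm (hyx.trans_eq hx.symm) hy
    subst this; rw [← hx]; simp
  have hxx : x ^ (α - 1) * x = x ^ α := rpow_sub_one_mul hx.ne' α
  have hyα : y * x ^ (α - 1) ≤ y ^ α := by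
    rcases eq_or_lt_of_le hy with h0 | h0
    · rw [← h0, zero_mul]
      exact Real.rpow_nonneg le_rfl α
    · calc y * x ^ (α - 1) ≤ y * y ^ (α - 1) :=
            mul_le_mul_of_nonneg_left (Real.rpow_le_rpow_of_nonpos h0 hyx (by linarith)) h0.le
      _ = y ^ α := by rw [mul_comm]; exact rpow_sub_one_mul h0.ne' α
  nlinarith

-- L4: α ≤ 1 lower
lemma pd_L4 {x y α : ℝ} (hy : 0 ≤ y) (hyx : y ≤ x) (hα0 : 0 < α) (hα : α ≤ 1) :
    α * x ^ (α - 1) * (x - y) ≤ x ^ α - y ^ α := by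
  rcases eq_or_lt_of_le (hy.trans hyx) with hx | hx
  · have : y = 0 := le_antisymm (hyx.trans_eq hx.symm) hy
    subst this; rw [← hx]; simp
  set t := y / x with ht
  have hx0 : x ≠ 0 := hx.ne'
  have htm : -1 ≤ t - 1 := by
    have : 0 ≤ t := div_nonneg hy hx.le
    linarith
  have hb := rpow_one_add_le_one_add_mul_self htm hα0.le hα
  rw [add_sub_cancel] at hb
  have hty : t ^ α * x ^ α = y ^ α := by
    rw [← Real.mul_rpow (div_nonneg hy hx.le) hx.le, div_mul_cancel₀ _ hx0]
  have hxα : 0 < x ^ α := Real.rpow_pos_of_pos hx α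
  have hxx : x ^ (α - 1) * x = x ^ α := rpow_sub_one_mul hx0 α
  have hxy : x ^ (α - 1) * y = t * x ^ α := by
    rw [← hxx, ht]; field_simp
  nlinarith [hxα, Real.rpow_nonneg hx.le (α - 1)]

lemma g_mono {b p : ℝ} (hb : 0 ≤ b) (hp : 1 < p) :
    MonotoneOn (fun s : ℝ => (b + s) ^ (p - 2) * s) (Set.Ici 0) := by
  intro s hs t ht hst
  simp only [Set.mem_Ici] at hs ht
  rcases le_or_gt 2 p with h2 | h2
  · have h1 : (b + s) ^ (p - 2) ≤ (b + t) ^ (p - 2) :=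
      Real.rpow_le_rpow (by linarith) (by linarith) (by linarith)
    exact mul_le_mul h1 hst hs (Real.rpow_nonneg (by linarith) _)
  · rcases eq_or_lt_of_le (by linarith : (0:ℝ) ≤ b + s) with h0 | h0
    · have hs0 : s = 0 := by nlinarith
      simp only [hs0, mul_zero]
      positivity
    have h0t : 0 < b + t := by linarith
    have e : ∀ u : ℝ, 0 < b + u →
        (b + u) ^ (p - 2) * u = (b + u) ^ (p - 1) * (u / (b + u)) := by
      intro u hu
      rw [show p - 2 = (p - 1) - 1 by ring, Real.rpow_sub hu, Real.rpow_one]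
      ring
    simp only
    rw [e s h0, e t h0t]
    apply mul_le_mul
    · exact Real.rpow_le_rpow h0.le (by linarith) (by linarith)
    · rw [div_le_div_iff₀ h0 h0t]
      nlinarith
    · positivity
    · positivity

lemma g_nonneg {b p : ℝ} (hb : 0 ≤ b) {s : ℝ} (hs : 0 ≤ s) :
    0 ≤ (b + s) ^ (p - 2) * s := by positivity

lemma g_intable {b p : ℝ} (hb : 0 ≤ b) (hp : 1 < p) {t x : ℝ} (ht : 0 ≤ t) (hx : t ≤ x) :
    IntervalIntegrable (fun s : ℝ => (b + s) ^ (p - 2) * s) volume t x := by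
  apply MonotoneOn.intervalIntegrable
  apply (g_mono hb hp).mono
  rw [Set.uIcc_of_le hx]
  intro u hu
  exact le_trans ht hu.1

lemma phi_nonneg {b p : ℝ} (hb : 0 ≤ b) {x : ℝ} (hx : 0 ≤ x) :
    0 ≤ ∫ s in (0:ℝ)..x, (b + s) ^ (p - 2) * s := by
  apply intervalIntegral.integral_nonneg hx
  intro u hu
  exact g_nonneg hb hu.1

lemma phi_lower_lin {b p : ℝ} (hb : 0 ≤ b) (hp : 1 < p) {t x : ℝ} (ht : 0 ≤ t) (htx : t ≤ x) :
    (x - t) * ((b + t) ^ (p - 2) * t) ≤ ∫ s in (0:ℝ)..x, (b + s) ^ (p - 2) * s := by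
  have hx : 0 ≤ x := ht.trans htx
  rw [← intervalIntegral.integral_add_adjacent_intervals (g_intable hb hp le_rfl ht)
      (g_intable hb hp ht htx)]
  have h1 : 0 ≤ ∫ s in (0:ℝ)..t, (b + s) ^ (p - 2) * s := phi_nonneg hb ht
  have h2 : (x - t) * ((b + t) ^ (p - 2) * t) ≤ ∫ s in t..x, (b + s) ^ (p - 2) * s := by
    have := intervalIntegral.integral_mono_on htx
      (intervalIntegrable_const (c := (b + t) ^ (p - 2) * t)) (g_intable hb hp ht htx)
      (fun u hu => g_mono hb hp (Set.mem_Ici.mpr ht) (Set.mem_Ici.mpr (ht.trans hu.1)) hu.1)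
    rw [intervalIntegral.integral_const, smul_eq_mul] at this
    linarith
  linarith

lemma rpow_sub_one_mul' {x : ℝ} (hx : x ≠ 0) (α : ℝ) : x ^ (α - 1) * x = x ^ α := by
  rw [← Real.rpow_add_one hx, sub_add_cancel]

lemma phi_upper {b p : ℝ} (hb : 0 ≤ b) (hp : 1 < p) {x : ℝ} (hx : 0 ≤ x) :
    (∫ s in (0:ℝ)..x, (b + s) ^ (p - 2) * s) ≤ (b + x) ^ (p - 2) * x ^ 2 := by
  rcases eq_or_lt_of_le hx with h0 | h0
  · rw [← h0]
    simp
  have hbx : 0 < b + x := by linarith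
  rcases le_or_gt 2 p with h2 | h2
  · -- p ≥ 2
    have hmono := intervalIntegral.integral_mono_on
      (g := fun s : ℝ => (b + x) ^ (p - 2) * s) hx (g_intable hb hp le_rfl hx)
      (by apply IntervalIntegrable.const_mul
          exact intervalIntegral.intervalIntegrable_id)
      (fun u hu => by
        have h1 : (b + u) ^ (p - 2) ≤ (b + x) ^ (p - 2) :=
          Real.rpow_le_rpow (by linarith [hu.1]) (by linarith [hu.2]) (by linarith)
        exact mul_le_mul_of_nonneg_right h1 hu.1)
    rw [intervalIntegral.integral_const_mul, integral_id] at hmono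
    calc (∫ s in (0:ℝ)..x, (b + s) ^ (p - 2) * s)
        ≤ (b + x) ^ (p - 2) * ((x ^ 2 - 0 ^ 2) / 2) := hmono
      _ ≤ (b + x) ^ (p - 2) * x ^ 2 := by
          have : (0:ℝ) ≤ (b + x) ^ (p - 2) := Real.rpow_nonneg hbx.le _
          nlinarith
  · -- p < 2
    set C := (b + x) ^ (p - 2) * x ^ (2 - p) with hC
    have hCnn : 0 ≤ C := by positivity
    have hmono := intervalIntegral.integral_mono_on
      (g := fun s : ℝ => C * s ^ (p - 1)) hx (g_intable hb hp le_rfl hx)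
      (by apply IntervalIntegrable.const_mul (c := C)
          exact intervalIntegral.intervalIntegrable_rpow' (by linarith))
      (fun u hu => by
        rcases eq_or_lt_of_le hu.1 with hu0 | hu0
        · rw [← hu0, mul_zero]
          exact mul_nonneg hCnn (Real.rpow_nonneg le_rfl _)
        · have hux : u ≤ x := hu.2
          have key : u / x * (b + x) ≤ b + u := by
            rw [div_mul_eq_mul_div, div_le_iff₀ h0]
            nlinarith
          have hpos : 0 < u / x * (b + x) := by positivity
          have h1 : (b + u) ^ (p - 2) ≤ (u / x * (b + x)) ^ (p - 2) :=
            Real.rpow_le_rpow_of_nonpos hpos key (by linarith)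
          have h2 : (u / x * (b + x)) ^ (p - 2) = u ^ (p - 2) * x ^ (2 - p) * (b + x) ^ (p - 2) := by
            rw [Real.mul_rpow (by positivity) hbx.le, Real.div_rpow hu0.le h0.le]
            rw [div_eq_mul_inv, ← Real.rpow_neg h0.le]
            ring_nf
          have h3 : u ^ (p - 2) * u = u ^ (p - 1) := by
            rw [show p - 2 = (p - 1) - 1 by ring]
            exact rpow_sub_one_mul' hu0.ne' (p - 1)
          calc (b + u) ^ (p - 2) * u ≤ (u / x * (b + x)) ^ (p - 2) * u :=
                mul_le_mul_of_nonneg_right h1 hu0.le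
            _ = C * u ^ (p - 1) := by rw [h2, hC]; rw [← h3]; ring)
    rw [intervalIntegral.integral_const_mul, integral_rpow (Or.inl (by linarith : (-1:ℝ) < p - 1))]
      at hmono
    have hint : (x ^ (p - 1 + 1) - (0:ℝ) ^ (p - 1 + 1)) / (p - 1 + 1) = x ^ p / p := by
      rw [Real.zero_rpow (by linarith : p - 1 + 1 ≠ 0), show p - 1 + 1 = p by ring, sub_zero]
    rw [hint] at hmono
    have hxp : x ^ (2 - p) * x ^ p = x ^ 2 := by
      rw [← Real.rpow_add h0, show 2 - p + p = 2 by ring]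
      rw [show ((2:ℝ):ℝ) = ((2:ℕ):ℝ) by norm_num, Real.rpow_natCast]
    calc (∫ s in (0:ℝ)..x, (b + s) ^ (p - 2) * s) ≤ C * (x ^ p / p) := hmono
      _ = (b + x) ^ (p - 2) * x ^ 2 / p := by rw [hC, ← hxp]; ring
      _ ≤ (b + x) ^ (p - 2) * x ^ 2 := by
          have h4 : (0:ℝ) ≤ (b + x) ^ (p - 2) * x ^ 2 := by positivity
          rw [div_le_iff₀ (by linarith : (0:ℝ) < p)]
          nlinarith


set_option maxHeartbeats 1600000 in
theorem stmt1 (δ pm pp : ℝ) (hδ : 0 ≤ δ) (hpm : 1 < pm) (hpmpp : pm ≤ pp) :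
    ∃ c : ℝ, 1 ≤ c ∧ ∀ p : ℝ, pm ≤ p → p ≤ pp → ∀ a : ℝ, 0 ≤ a → ∀ r : ℝ, 0 ≤ r →
      c⁻¹ * (((δ + a) ^ (p - 1) + r) ^ (p / (p - 1) - 2) * r ^ 2) ≤
          fconj (phiShift δ p a) r ∧
      fconj (phiShift δ p a) r ≤
          c * (((δ + a) ^ (p - 1) + r) ^ (p / (p - 1) - 2) * r ^ 2) := by
  set M : ℝ := max 1 (pp - 1) with hMdef
  set μ : ℝ := min 1 (pm - 1) with hμdef
  set m : ℝ := min 2 pm with hmdef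
  have hM1 : 1 ≤ M := le_max_left _ _
  have hMpos : 0 < M := by linarith
  have hμpos : 0 < μ := lt_min one_pos (by linarith)
  have hμ1 : μ ≤ 1 := min_le_left _ _
  have hm1 : 1 < m := lt_min one_lt_two hpm
  have hm2 : m ≤ 2 := min_le_left _ _
  set θ : ℝ := (μ / 2) ^ (1 / (m - 1)) with hθdef
  have hθpos : 0 < θ := Real.rpow_pos_of_pos (by linarith) _
  have hθ1 : θ ≤ 1 := Real.rpow_le_one (by linarith) (by linarith) (one_div_nonneg.mpr (by linarith))
  have hθm : θ ^ (m - 1) = μ / 2 := by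
    rw [hθdef, ← Real.rpow_mul (by linarith : (0:ℝ) ≤ μ / 2),
      one_div_mul_cancel (by linarith : m - 1 ≠ 0), Real.rpow_one]
  set lam : ℝ := (2 * M) ^ (1 / μ) with hlamdef
  have hlam1 : 1 ≤ lam := by
    rw [hlamdef]
    calc (1:ℝ) = 1 ^ (1 / μ) := (Real.one_rpow _).symm
    _ ≤ (2 * M) ^ (1 / μ) := Real.rpow_le_rpow zero_le_one (by linarith) (by positivity)
  have hlamμ : lam ^ μ = 2 * M := by
    rw [hlamdef, ← Real.rpow_mul (by linarith : (0:ℝ) ≤ 2 * M),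
      one_div_mul_cancel hμpos.ne', Real.rpow_one]
  have hz1 : 0 ≤ 2 * M / θ := by positivity
  have hz2 : 0 ≤ 2 * lam / μ := by positivity
  refine ⟨1 + 2 * M / θ + 2 * lam / μ, by linarith, ?_⟩
  set c : ℝ := 1 + 2 * M / θ + 2 * lam / μ with hcdef
  have hclow : 2 * M / θ ≤ c := by rw [hcdef]; linarith
  have hcup : 2 * lam / μ ≤ c := by rw [hcdef]; linarith
  have hcpos : 0 < c := by rw [hcdef]; linarith
  have hMpp : pp - 1 ≤ M := le_max_right _ _
  have hμpm : μ ≤ pm - 1 := min_le_right _ _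
  have hmpm : m ≤ pm := min_le_right _ _
  clear_value M μ m θ lam c
  intro p hppm hppp a ha r hr
  set b : ℝ := δ + a with hbdef
  have hb : 0 ≤ b := by linarith
  have hp : 1 < p := lt_of_lt_of_le hpm hppm
  have hp1 : 0 < p - 1 := by linarith
  have hphi : ∀ s : ℝ, phiShift δ p a s = ∫ t in (0:ℝ)..s, (b + t) ^ (p - 2) * t := fun s => rfl
  clear_value b
  rcases eq_or_lt_of_le hr with hr0 | hrpos
  · -- r = 0
    subst hr0
    have hfc : fconj (phiShift δ p a) 0 = 0 := by
      have hub : ∀ s : NNReal, (0:ℝ) * (s:ℝ) - phiShift δ p a (s:ℝ) ≤ 0 := by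
        intro s
        have h1 := phi_nonneg (b := b) (p := p) hb s.coe_nonneg
        rw [hphi]
        linarith
      have hbdd : BddAbove (Set.range fun s : NNReal =>
          (0:ℝ) * (s:ℝ) - phiShift δ p a (s:ℝ)) := by
        refine ⟨0, ?_⟩
        rintro x ⟨s, rfl⟩
        exact hub s
      apply le_antisymm
      · exact ciSup_le hub
      · have h0 : (0:ℝ) * ((0:NNReal):ℝ) - phiShift δ p a ((0:NNReal):ℝ) = 0 := by
          rw [hphi]
          simp
        calc (0:ℝ) = (0:ℝ) * ((0:NNReal):ℝ) - phiShift δ p a ((0:NNReal):ℝ) := h0.symm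
        _ ≤ fconj (phiShift δ p a) 0 := le_ciSup hbdd 0
    rw [hfc]
    norm_num
  · -- r > 0
    set u : ℝ := b ^ (p - 1) + r with hudef
    have hbp : 0 ≤ b ^ (p - 1) := Real.rpow_nonneg hb _
    have hu : 0 < u := by rw [hudef]; linarith
    set T : ℝ := u ^ (p / (p - 1) - 2) * r ^ 2 with hTdef
    set s₀ : ℝ := u ^ (1 / (p - 1)) - b with hs₀def
    have hbs₀ : b + s₀ = u ^ (1 / (p - 1)) := by rw [hs₀def]; ring
    have hbs₀pos : 0 < b + s₀ := by rw [hbs₀]; exact Real.rpow_pos_of_pos hu _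
    have hbpow : (b ^ (p - 1)) ^ (1 / (p - 1)) = b := by
      rw [← Real.rpow_mul hb, mul_one_div_cancel hp1.ne', Real.rpow_one]
    have hs₀pos : 0 < s₀ := by
      rw [hs₀def, sub_pos, ← hbpow]
      exact Real.rpow_lt_rpow hbp (by rw [hudef]; linarith) (by positivity)
    have huval : (b + s₀) ^ (p - 1) = u := by
      rw [hbs₀, ← Real.rpow_mul hu.le, one_div_mul_cancel hp1.ne', Real.rpow_one]
    have hrval : r = (b + s₀) ^ (p - 1) - b ^ (p - 1) := by rw [huval, hudef]; ring
    set G : ℝ := (b + s₀) ^ (p - 2) * s₀ with hGdef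
    have hGpos : 0 < G := mul_pos (Real.rpow_pos_of_pos hbs₀pos _) hs₀pos
    have hexp : (p:ℝ) - 1 - 1 = p - 2 := by ring
    have hbb : b ≤ b + s₀ := by linarith
    have hss : b + s₀ - b = s₀ := by ring
    have K1a : r ≤ M * G := by
      rcases le_or_gt 2 p with h2 | h2
      · have hM : p - 1 ≤ M := by linarith
        calc r = (b + s₀) ^ (p - 1) - b ^ (p - 1) := hrval
        _ ≤ (p - 1) * (b + s₀) ^ (p - 1 - 1) * (b + s₀ - b) :=
            pd_L1 hb hbb (by linarith)
        _ = (p - 1) * G := by rw [hexp, hss, hGdef]; ring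
        _ ≤ M * G := mul_le_mul_of_nonneg_right hM hGpos.le
      · calc r = (b + s₀) ^ (p - 1) - b ^ (p - 1) := hrval
        _ ≤ (b + s₀) ^ (p - 1 - 1) * (b + s₀ - b) := pd_L3 hb hbb hp1 (by linarith)
        _ = 1 * G := by rw [hexp, hss, hGdef]; ring
        _ ≤ M * G := mul_le_mul_of_nonneg_right hM1 hGpos.le
    have K1b : μ * G ≤ r := by
      rcases le_or_gt 2 p with h2 | h2
      · calc μ * G ≤ 1 * G := mul_le_mul_of_nonneg_right hμ1 hGpos.le
        _ = (b + s₀) ^ (p - 1 - 1) * (b + s₀ - b) := by rw [hexp, hss, hGdef]; ring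
        _ ≤ (b + s₀) ^ (p - 1) - b ^ (p - 1) := pd_L2 hb hbb (by linarith)
        _ = r := hrval.symm
      · have hμp : μ ≤ p - 1 := by linarith
        calc μ * G ≤ (p - 1) * G := mul_le_mul_of_nonneg_right hμp hGpos.le
        _ = (p - 1) * (b + s₀) ^ (p - 1 - 1) * (b + s₀ - b) := by
            rw [hexp, hss, hGdef]; ring
        _ ≤ (b + s₀) ^ (p - 1) - b ^ (p - 1) := pd_L4 hb hbb hp1 (by linarith)
        _ = r := hrval.symm
    have hTX : u ^ (p / (p - 1) - 2) = (b + s₀) ^ (2 - p) := by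
      rw [hbs₀, ← Real.rpow_mul hu.le]
      congr 1
      field_simp
      ring
    have hinv : (b + s₀) ^ (2 - p) * (b + s₀) ^ (p - 2) = 1 := by
      rw [← Real.rpow_add hbs₀pos, show (2:ℝ) - p + (p - 2) = 0 by ring, Real.rpow_zero]
    have K2a : T ≤ M * (r * s₀) := by
      calc T = (b + s₀) ^ (2 - p) * r * r := by rw [hTdef, hTX]; ring
      _ ≤ (b + s₀) ^ (2 - p) * r * (M * G) := by
          apply mul_le_mul_of_nonneg_left K1a (by positivity)
      _ = M * (r * s₀) * ((b + s₀) ^ (2 - p) * (b + s₀) ^ (p - 2)) := by rw [hGdef]; ring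
      _ = M * (r * s₀) := by rw [hinv, mul_one]
    have K2b : μ * (r * s₀) ≤ T := by
      calc μ * (r * s₀) = μ * (r * s₀) * ((b + s₀) ^ (2 - p) * (b + s₀) ^ (p - 2)) := by
            rw [hinv, mul_one]
      _ = (b + s₀) ^ (2 - p) * r * (μ * G) := by rw [hGdef]; ring
      _ ≤ (b + s₀) ^ (2 - p) * r * r := mul_le_mul_of_nonneg_left K1b (by positivity)
      _ = T := by rw [hTdef, hTX]; ring
    clear_value u s₀ T G
    have hTnn : 0 ≤ T := le_trans (by positivity) K2b
    have hrs₀T : r * s₀ ≤ T / μ := (le_div_iff₀ hμpos).mpr (by linarith)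
    have hTrs₀ : T / M ≤ r * s₀ := (div_le_iff₀ hMpos).mpr (by linarith)
    have hub : ∀ s : ℝ, 0 ≤ s → r * s - phiShift δ p a s ≤ 2 * lam / μ * T := by
      intro s hs
      rw [hphi]
      rcases le_or_gt s (2 * lam * s₀) with hcase | hcase
      · have h1 : 0 ≤ ∫ t in (0:ℝ)..s, (b + t) ^ (p - 2) * t := phi_nonneg hb hs
        have h2 : r * s ≤ 2 * lam * (r * s₀) := by
          calc r * s ≤ r * (2 * lam * s₀) := mul_le_mul_of_nonneg_left hcase hrpos.le
          _ = 2 * lam * (r * s₀) := by ring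
        have h4 : 2 * lam * (r * s₀) ≤ 2 * lam * (T / μ) :=
          mul_le_mul_of_nonneg_left hrs₀T (by positivity)
        have h5 : 2 * lam * (T / μ) = 2 * lam / μ * T := by ring
        linarith
      · have hgl : lam ^ μ * G ≤ (b + lam * s₀) ^ (p - 2) * (lam * s₀) := by
          rcases le_or_gt 2 p with h2 | h2
          · have h1 : (b + s₀) ^ (p - 2) ≤ (b + lam * s₀) ^ (p - 2) :=
              Real.rpow_le_rpow hbs₀pos.le
                (by have := mul_le_mul_of_nonneg_right hlam1 hs₀pos.le; linarith)
                (by linarith)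
            have hlm : lam ^ μ ≤ lam := by
              calc lam ^ μ ≤ lam ^ (1:ℝ) := Real.rpow_le_rpow_of_exponent_le hlam1 hμ1
              _ = lam := Real.rpow_one lam
            calc lam ^ μ * G ≤ lam * G := mul_le_mul_of_nonneg_right hlm hGpos.le
            _ = (b + s₀) ^ (p - 2) * (lam * s₀) := by rw [hGdef]; ring
            _ ≤ (b + lam * s₀) ^ (p - 2) * (lam * s₀) :=
                mul_le_mul_of_nonneg_right h1 (by positivity)
          · have hmono : (lam * (b + s₀)) ^ (p - 2) ≤ (b + lam * s₀) ^ (p - 2) := by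
              apply Real.rpow_le_rpow_of_nonpos (by positivity)
                (by have := mul_le_mul_of_nonneg_right hlam1 hb; linarith) (by linarith)
            have hmul : (lam * (b + s₀)) ^ (p - 2) = lam ^ (p - 2) * (b + s₀) ^ (p - 2) :=
              Real.mul_rpow (by linarith) hbs₀pos.le
            have hlm : lam ^ μ ≤ lam ^ (p - 1) :=
              Real.rpow_le_rpow_of_exponent_le hlam1 (by linarith)
            have hl12 : lam ^ (p - 1 - 1) * lam = lam ^ (p - 1) :=
              rpow_sub_one_mul (by positivity : lam ≠ 0) _
            rw [hexp] at hl12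
            calc lam ^ μ * G ≤ lam ^ (p - 1) * G := mul_le_mul_of_nonneg_right hlm hGpos.le
            _ = lam ^ (p - 2) * lam * ((b + s₀) ^ (p - 2) * s₀) := by rw [hl12, hGdef]
            _ = lam ^ (p - 2) * (b + s₀) ^ (p - 2) * (lam * s₀) := by ring
            _ = (lam * (b + s₀)) ^ (p - 2) * (lam * s₀) := by rw [hmul]
            _ ≤ (b + lam * s₀) ^ (p - 2) * (lam * s₀) :=
                mul_le_mul_of_nonneg_right hmono (by positivity)
        have hgl2 : 2 * r ≤ (b + lam * s₀) ^ (p - 2) * (lam * s₀) := by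
          rw [hlamμ] at hgl
          linarith [K1a]
        have hl0 : 0 ≤ lam * s₀ := by positivity
        have hts : lam * s₀ ≤ s := by linarith
        have hphil := phi_lower_lin hb hp (t := lam * s₀) (by positivity) hts
        have hhalf : s / 2 ≤ s - lam * s₀ := by linarith
        have hrs : r * s ≤ ∫ t in (0:ℝ)..s, (b + t) ^ (p - 2) * t := by
          calc r * s = s / 2 * (2 * r) := by ring
          _ ≤ (s - lam * s₀) * ((b + lam * s₀) ^ (p - 2) * (lam * s₀)) :=
              mul_le_mul hhalf hgl2 (by positivity) (by linarith)
          _ ≤ _ := hphil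
        have h6 : 0 ≤ 2 * lam / μ * T := mul_nonneg (by positivity) hTnn
        linarith
    have hbdd : BddAbove (Set.range fun s : NNReal =>
        r * (s:ℝ) - phiShift δ p a (s:ℝ)) := by
      refine ⟨2 * lam / μ * T, ?_⟩
      rintro x ⟨s, rfl⟩
      exact hub s s.coe_nonneg
    constructor
    · -- lower bound
      set s₁ : ℝ := θ * s₀ with hs₁def
      have hs₁nn : 0 ≤ s₁ := by rw [hs₁def]; positivity
      clear_value s₁
      have hφup := phi_upper hb hp (x := s₁) hs₁nn
      have hkey : (b + s₁) ^ (p - 2) * s₁ ^ 2 ≤ θ ^ m * (G * s₀) := by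
        rcases le_or_gt 2 p with h2 | h2
        · have h1 : (b + s₁) ^ (p - 2) ≤ (b + s₀) ^ (p - 2) :=
            Real.rpow_le_rpow (by positivity)
              (by have := mul_le_mul_of_nonneg_right hθ1 hs₀pos.le
                  rw [hs₁def]; linarith) (by linarith)
          have hθ2 : θ ^ (2:ℕ) ≤ θ ^ m := by
            rw [show (θ:ℝ) ^ (2:ℕ) = θ ^ ((2:ℕ):ℝ) from (Real.rpow_natCast θ 2).symm]
            exact Real.rpow_le_rpow_of_exponent_ge hθpos hθ1 (by exact_mod_cast hm2)
          calc (b + s₁) ^ (p - 2) * s₁ ^ 2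
              = (b + s₁) ^ (p - 2) * s₀ ^ 2 * θ ^ (2:ℕ) := by rw [hs₁def]; ring
          _ ≤ (b + s₀) ^ (p - 2) * s₀ ^ 2 * θ ^ m := by
              apply mul_le_mul (mul_le_mul_of_nonneg_right h1 (by positivity)) hθ2
                (by positivity) (by positivity)
          _ = θ ^ m * (G * s₀) := by rw [hGdef]; ring
        · have hmono : (b + s₁) ^ (p - 2) ≤ (θ * (b + s₀)) ^ (p - 2) := by
            apply Real.rpow_le_rpow_of_nonpos (by positivity)
              (by have := mul_le_mul_of_nonneg_right hθ1 hb
                  rw [hs₁def]; linarith) (by linarith)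
          have hmul : (θ * (b + s₀)) ^ (p - 2) = θ ^ (p - 2) * (b + s₀) ^ (p - 2) :=
            Real.mul_rpow hθpos.le hbs₀pos.le
          have hθa : θ ^ (p - 1 - 1) * θ = θ ^ (p - 1) := rpow_sub_one_mul hθpos.ne' _
          rw [hexp] at hθa
          have hθb : θ ^ (p - 1) * θ = θ ^ p := by
            have := rpow_sub_one_mul hθpos.ne' p
            rwa [show (p:ℝ) - 1 = p - 1 by ring] at this
          have hθp : θ ^ p ≤ θ ^ m :=
            Real.rpow_le_rpow_of_exponent_ge hθpos hθ1 (by linarith)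
          calc (b + s₁) ^ (p - 2) * s₁ ^ 2
              = (b + s₁) ^ (p - 2) * (θ * θ) * s₀ ^ 2 := by rw [hs₁def]; ring
          _ ≤ (θ * (b + s₀)) ^ (p - 2) * (θ * θ) * s₀ ^ 2 := by
              apply mul_le_mul_of_nonneg_right
                (mul_le_mul_of_nonneg_right hmono (by positivity)) (by positivity)
          _ = θ ^ (p - 2) * θ * θ * ((b + s₀) ^ (p - 2) * s₀ ^ 2) := by rw [hmul]; ring
          _ = θ ^ p * ((b + s₀) ^ (p - 2) * s₀ ^ 2) := by rw [hθa, hθb]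
          _ ≤ θ ^ m * ((b + s₀) ^ (p - 2) * s₀ ^ 2) :=
              mul_le_mul_of_nonneg_right hθp (by positivity)
          _ = θ ^ m * (G * s₀) := by rw [hGdef]; ring
      have hθmval : θ ^ m = μ / 2 * θ := by
        rw [← hθm]
        exact (rpow_sub_one_mul hθpos.ne' m).symm
      have hθm2 : θ ^ m * (G * s₀) ≤ θ / 2 * (r * s₀) := by
        have h1 : G * s₀ ≤ r * s₀ / μ := by
          rw [le_div_iff₀ hμpos]
          have := mul_le_mul_of_nonneg_right K1b hs₀pos.le
          linarith
        calc θ ^ m * (G * s₀) = μ / 2 * θ * (G * s₀) := by rw [hθmval]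
        _ ≤ μ / 2 * θ * (r * s₀ / μ) := by
            apply mul_le_mul_of_nonneg_left h1 (by positivity)
        _ = θ / 2 * (r * s₀) := by field_simp
      have hlow : θ / 2 * (T / M) ≤ r * s₁ - phiShift δ p a s₁ := by
        rw [hphi]
        have h7 : (∫ t in (0:ℝ)..s₁, (b + t) ^ (p - 2) * t) ≤ θ / 2 * (r * s₀) :=
          le_trans hφup (le_trans hkey hθm2)
        have h8 : r * s₁ = θ * (r * s₀) := by rw [hs₁def]; ring
        have h9 : θ / 2 * (T / M) ≤ θ / 2 * (r * s₀) :=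
          mul_le_mul_of_nonneg_left hTrs₀ (by positivity)
        linarith
      have hle : (fun s : NNReal => r * (s:ℝ) - phiShift δ p a (s:ℝ)) ⟨s₁, hs₁nn⟩ ≤
          fconj (phiShift δ p a) r := le_ciSup hbdd ⟨s₁, hs₁nn⟩
      have hcinv : c⁻¹ ≤ θ / (2 * M) := by
        rw [show θ / (2 * M) = (2 * M / θ)⁻¹ by field_simp]
        exact inv_anti₀ (by positivity) hclow
      calc c⁻¹ * T ≤ θ / (2 * M) * T := mul_le_mul_of_nonneg_right hcinv hTnn
      _ = θ / 2 * (T / M) := by ring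
      _ ≤ r * s₁ - phiShift δ p a s₁ := hlow
      _ ≤ fconj (phiShift δ p a) r := hle
    · -- upper bound
      calc fconj (phiShift δ p a) r ≤ 2 * lam / μ * T := ciSup_le fun s => hub s s.2
      _ ≤ c * T := mul_le_mul_of_nonneg_right hcup hTnn
end

section
/- Let d ≥ 1, δ ≥ 0 and 1 < p⁻ ≤ p⁺ < ∞. For each ε > 0 there exists a constant c_ε ≥ 1, depending only on ε, d, p⁻, p⁺ and δ, such that for every exponent p ∈ [p⁻, p⁺], all matrices A, B ∈ ℝ^{d×d} and every r ≥ 0: (φ_p)_{|A^sym|}(r) ≤ c_ε (φ_p)_{|B^sym|}(r) + ε |F_p(A) − F_p(B)|². -/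
open MeasureTheory

/-- The symmetric part `A^sym := ½(A + Aᵀ)`. -/
noncomputable def msym {d : ℕ} (A : Matrix (Fin d) (Fin d) ℝ) : Matrix (Fin d) (Fin d) ℝ :=
  (2 : ℝ)⁻¹ • (A + A.transpose)

/-- The Frobenius norm of a matrix. -/
noncomputable def frob {d : ℕ} (A : Matrix (Fin d) (Fin d) ℝ) : ℝ :=
  Real.sqrt (∑ i, ∑ j, (A i j) ^ 2)

/-- `F_p(A) := (δ+|A^sym|)^{(p−2)/2} A^sym`. -/
noncomputable def Fmap {d : ℕ} (δ p : ℝ) (A : Matrix (Fin d) (Fin d) ℝ) :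
    Matrix (Fin d) (Fin d) ℝ :=
  ((δ + frob (msym A)) ^ ((p - 2) / 2)) • msym A

open intervalIntegral

attribute [local instance] Matrix.frobeniusSeminormedAddCommGroup Matrix.frobeniusNormedSpace

lemma frob_eq_norm {d : ℕ} (A : Matrix (Fin d) (Fin d) ℝ) : frob A = ‖A‖ := by
  rw [Matrix.frobenius_norm_def, frob, Real.sqrt_eq_rpow]
  simp [Real.norm_eq_abs, Real.rpow_two, sq_abs]

lemma frob_nonneg {d : ℕ} (A : Matrix (Fin d) (Fin d) ℝ) : 0 ≤ frob A :=
  Real.sqrt_nonneg _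

lemma frob_smul {d : ℕ} (c : ℝ) (A : Matrix (Fin d) (Fin d) ℝ) :
    frob (c • A) = |c| * frob A := by
  rw [frob_eq_norm, frob_eq_norm, norm_smul, Real.norm_eq_abs]

lemma frob_rev_triangle {d : ℕ} (A B : Matrix (Fin d) (Fin d) ℝ) :
    |frob A - frob B| ≤ frob (A - B) := by
  rw [frob_eq_norm, frob_eq_norm, frob_eq_norm]
  exact abs_norm_sub_norm_le A B

/-- the integrand is monotone on [0,∞) -/
lemma integrand_mono {p : ℝ} (hp : 1 < p) {c : ℝ} (hc : 0 ≤ c) :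
    MonotoneOn (fun s : ℝ => (c + s) ^ (p - 2) * s) (Set.Ici (0:ℝ)) := by
  intro s hs t ht hst
  simp only [Set.mem_Ici] at hs ht
  simp only []
  show (c + s) ^ (p - 2) * s ≤ (c + t) ^ (p - 2) * t
  rcases eq_or_lt_of_le hs with h0 | h0
  · -- s = 0
    have : ((c + s) ^ (p-2) * s : ℝ) = (c + s) ^ (p-2) * 0 := by rw [← h0]
    rw [this, mul_zero]
    exact mul_nonneg (Real.rpow_nonneg (by linarith) _) ht
  · -- 0 < s
    have hcs : 0 < c + s := by linarith
    have hct : 0 < c + t := by linarith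
    have key : ∀ u : ℝ, 0 < u → 0 < c + u →
        (c + u) ^ (p - 2) * u = (c + u) ^ (p - 1) * (u / (c + u)) := by
      intro u hu hcu
      rw [show p - 1 = (p - 2) + 1 by ring, Real.rpow_add_one hcu.ne']
      field_simp
    rw [key s h0 hcs, key t (lt_of_lt_of_le h0 hst) hct]
    apply mul_le_mul
    · exact Real.rpow_le_rpow hcs.le (by linarith) (by linarith)
    · rw [div_le_div_iff₀ hcs hct]
      nlinarith
    · positivity
    · positivity

lemma integrand_intble {p : ℝ} (hp : 1 < p) {c : ℝ} (hc : 0 ≤ c) {r : ℝ} (hr : 0 ≤ r) :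
    IntervalIntegrable (fun s : ℝ => (c + s) ^ (p - 2) * s) volume 0 r := by
  apply MonotoneOn.intervalIntegrable
  rw [Set.uIcc_of_le hr]
  exact (integrand_mono hp hc).mono (Set.Icc_subset_Ici_self)

lemma integrand_nonneg {p : ℝ} {c s : ℝ} (hc : 0 ≤ c) (hs : 0 ≤ s) :
    0 ≤ (c + s) ^ (p - 2) * s :=
  mul_nonneg (Real.rpow_nonneg (by linarith) _) hs

lemma phiShift_nonneg {δ p a r : ℝ} (hδ : 0 ≤ δ) (ha : 0 ≤ a) (hr : 0 ≤ r) :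
    0 ≤ phiShift δ p a r := by
  apply intervalIntegral.integral_nonneg hr
  intro s hs
  exact integrand_nonneg (by linarith) hs.1

/-- pointwise comparison integrates -/
lemma phi_le_const_mul {δ p a b r C : ℝ} (hp : 1 < p) (hδ : 0 ≤ δ) (ha : 0 ≤ a) (hb : 0 ≤ b)
    (hr : 0 ≤ r) (hC : 0 ≤ C)
    (h : ∀ s ∈ Set.Icc (0:ℝ) r, (δ + a + s) ^ (p - 2) * s ≤ C * ((δ + b + s) ^ (p - 2) * s)) :
    phiShift δ p a r ≤ C * phiShift δ p b r := by
  rw [phiShift, phiShift, ← intervalIntegral.integral_const_mul]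
  exact intervalIntegral.integral_mono_on hr (integrand_intble hp (by linarith) hr)
    ((integrand_intble hp (by linarith) hr).const_mul C) h

lemma phi_ge_rpow {δ p b r : ℝ} (hp : 1 < p) (hp2 : 2 ≤ p) (hδ : 0 ≤ δ) (hb : 0 ≤ b)
    (hr : 0 ≤ r) : r ^ p / p ≤ phiShift δ p b r := by
  have hint : IntervalIntegrable (fun s : ℝ => s ^ (p - 1)) volume 0 r :=
    intervalIntegral.intervalIntegrable_rpow' (by linarith)
  have h1 : (∫ s in (0:ℝ)..r, s ^ (p - 1)) = r ^ p / p := by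
    rw [integral_rpow (Or.inl (by linarith))]
    rw [show p - 1 + 1 = p by ring, Real.zero_rpow (by linarith)]
    ring
  rw [← h1, phiShift]
  apply intervalIntegral.integral_mono_on hr hint (integrand_intble hp (by linarith) hr)
  intro s hs
  rcases eq_or_lt_of_le hs.1 with h0 | h0
  · rw [← h0, Real.zero_rpow (by linarith)]
    exact integrand_nonneg (by linarith) le_rfl
  · rw [show p - 1 = (p-2) + 1 by ring, Real.rpow_add_one h0.ne']
    exact mul_le_mul_of_nonneg_right
      (Real.rpow_le_rpow h0.le (by linarith) (by linarith)) h0.le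

lemma phi_le_rpow {δ p a r : ℝ} (hp : 1 < p) (hp2 : p < 2) (hδ : 0 ≤ δ) (ha : 0 ≤ a)
    (hr : 0 ≤ r) : phiShift δ p a r ≤ r ^ p / p := by
  have hint : IntervalIntegrable (fun s : ℝ => s ^ (p - 1)) volume 0 r :=
    intervalIntegral.intervalIntegrable_rpow' (by linarith)
  have h1 : (∫ s in (0:ℝ)..r, s ^ (p - 1)) = r ^ p / p := by
    rw [integral_rpow (Or.inl (by linarith))]
    rw [show p - 1 + 1 = p by ring, Real.zero_rpow (by linarith)]
    ring
  rw [← h1, phiShift]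
  apply intervalIntegral.integral_mono_on hr (integrand_intble hp (by linarith) hr) hint
  intro s hs
  rcases eq_or_lt_of_le hs.1 with h0 | h0
  · rw [← h0, Real.zero_rpow (by linarith), mul_zero]
  · rw [show p - 1 = (p-2) + 1 by ring, Real.rpow_add_one h0.ne']
    exact mul_le_mul_of_nonneg_right
      (Real.rpow_le_rpow_of_nonpos h0 (by linarith) (by linarith)) h0.le

lemma phi_ge_quad {δ p b r : ℝ} (hp : 1 < p) (hp2 : p < 2) (hδ : 0 ≤ δ) (hb : 0 ≤ b)
    (hr : 0 ≤ r) : (δ + b + r) ^ (p - 2) * (r ^ 2 / 2) ≤ phiShift δ p b r := by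
  have h1 : (∫ s in (0:ℝ)..r, (δ + b + r) ^ (p - 2) * s)
      = (δ + b + r) ^ (p - 2) * (r ^ 2 / 2) := by
    rw [intervalIntegral.integral_const_mul, integral_id]
    ring
  rw [← h1, phiShift]
  apply intervalIntegral.integral_mono_on hr
    ((intervalIntegral.intervalIntegrable_id).const_mul _)
    (integrand_intble hp (by linarith) hr)
  intro s hs
  rcases eq_or_lt_of_le hs.1 with h0 | h0
  · rw [← h0, mul_zero, mul_zero]
  · apply mul_le_mul_of_nonneg_right _ h0.le
    exact Real.rpow_le_rpow_of_nonpos (by linarith) (by linarith [hs.2]) (by linarith)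

lemma phi_split_ge2 {δ p a b r : ℝ} (hp : 1 < p) (hp2 : 2 ≤ p) (hδ : 0 ≤ δ) (ha : 0 ≤ a)
    (hb : 0 ≤ b) (hr : 0 ≤ r) :
    phiShift δ p a r ≤ 2 ^ (p - 2) * phiShift δ p b r
      + 2 ^ (p - 2) * a ^ (p - 2) * (r ^ 2 / 2) := by
  have hint1 := (integrand_intble hp (show (0:ℝ) ≤ δ + b by linarith) hr).const_mul
    ((2:ℝ) ^ (p - 2))
  have hint2 : IntervalIntegrable (fun s : ℝ => 2 ^ (p-2) * a ^ (p-2) * s) volume 0 r :=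
    (intervalIntegral.intervalIntegrable_id).const_mul _
  have key : phiShift δ p a r ≤
      ∫ s in (0:ℝ)..r, (2 ^ (p-2) * ((δ + b + s) ^ (p - 2) * s) + 2 ^ (p-2) * a ^ (p-2) * s) := by
    rw [phiShift]
    apply intervalIntegral.integral_mono_on hr (integrand_intble hp (by linarith) hr)
      (hint1.add hint2)
    intro s hs
    have hs0 := hs.1
    rcases le_total (δ + b + s) a with hM | hM
    · -- (δ+a+s) ≤ 2a
      have h2 : (δ + a + s) ^ (p-2) ≤ 2 ^ (p-2) * a ^ (p-2) := by
        calc (δ + a + s) ^ (p-2) ≤ (2 * a) ^ (p-2) :=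
              Real.rpow_le_rpow (by linarith) (by linarith) (by linarith)
          _ = 2 ^ (p-2) * a ^ (p-2) := Real.mul_rpow (by norm_num) ha
      have := mul_le_mul_of_nonneg_right h2 hs0
      have hnn : 0 ≤ 2 ^ (p-2) * ((δ + b + s) ^ (p - 2) * s) :=
        mul_nonneg (Real.rpow_nonneg (by norm_num) _) (integrand_nonneg (by linarith) hs0)
      linarith
    · have h2 : (δ + a + s) ^ (p-2) ≤ 2 ^ (p-2) * (δ + b + s) ^ (p-2) := by
        calc (δ + a + s) ^ (p-2) ≤ (2 * (δ + b + s)) ^ (p-2) :=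
              Real.rpow_le_rpow (by linarith) (by linarith) (by linarith)
          _ = 2 ^ (p-2) * (δ + b + s) ^ (p-2) := Real.mul_rpow (by norm_num) (by linarith)
      have := mul_le_mul_of_nonneg_right h2 hs0
      have hnn : 0 ≤ 2 ^ (p-2) * a ^ (p-2) * s :=
        mul_nonneg (mul_nonneg (Real.rpow_nonneg (by norm_num) _) (Real.rpow_nonneg ha _)) hs0
      nlinarith [mul_le_mul_of_nonneg_right h2 hs0]
  calc phiShift δ p a r ≤ _ := key
    _ = 2 ^ (p - 2) * phiShift δ p b r + 2 ^ (p - 2) * a ^ (p - 2) * (r ^ 2 / 2) := by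
        rw [intervalIntegral.integral_add hint1 hint2, intervalIntegral.integral_const_mul,
          intervalIntegral.integral_const_mul, integral_id, phiShift]
        ring

lemma near_ge2 {δ p a b r : ℝ} (hp : 1 < p) (hp2 : 2 ≤ p) (hδ : 0 ≤ δ) (ha : 0 ≤ a)
    (hb : 0 ≤ b) (hr : 0 ≤ r) (hab : a ≤ 16 * (δ + b)) :
    phiShift δ p a r ≤ 17 ^ (p - 2) * phiShift δ p b r := by
  apply phi_le_const_mul hp hδ ha hb hr (Real.rpow_nonneg (by norm_num) _)
  intro s hs
  have h2 : (δ + a + s) ^ (p-2) ≤ 17 ^ (p-2) * (δ + b + s) ^ (p-2) := by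
    calc (δ + a + s) ^ (p-2) ≤ (17 * (δ + b + s)) ^ (p-2) :=
          Real.rpow_le_rpow (by linarith [hs.1]) (by linarith [hs.1]) (by linarith)
      _ = 17 ^ (p-2) * (δ + b + s) ^ (p-2) := Real.mul_rpow (by norm_num) (by linarith [hs.1])
  calc (δ + a + s) ^ (p-2) * s ≤ (17 ^ (p-2) * (δ + b + s) ^ (p-2)) * s :=
        mul_le_mul_of_nonneg_right h2 hs.1
    _ = 17 ^ (p-2) * ((δ + b + s) ^ (p-2) * s) := by ring

lemma near_lt2 {δ p a b r : ℝ} (hp : 1 < p) (hp2 : p < 2) (hδ : 0 ≤ δ) (ha : 0 ≤ a)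
    (hb : 0 ≤ b) (hr : 0 ≤ r) (hba : b ≤ 16 * (δ + a)) :
    phiShift δ p a r ≤ 17 ^ (2 - p) * phiShift δ p b r := by
  apply phi_le_const_mul hp hδ ha hb hr (Real.rpow_nonneg (by norm_num) _)
  intro s hs
  rcases eq_or_lt_of_le hs.1 with h0 | h0
  · rw [← h0, mul_zero, mul_zero, mul_zero]
  have hpos : (0:ℝ) < δ + a + s := by linarith
  have h17 : (17:ℝ) ^ (p - 2) * (17:ℝ) ^ (2 - p) = 1 := by
    rw [← Real.rpow_add (by norm_num)]; norm_num
  have h2 : (δ + a + s) ^ (p-2) ≤ 17 ^ (2-p) * (δ + b + s) ^ (p-2) := by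
    have hbd : (17:ℝ) ^ (p-2) * (δ + a + s) ^ (p-2) ≤ (δ + b + s) ^ (p-2) := by
      calc (17:ℝ) ^ (p-2) * (δ + a + s) ^ (p-2) = (17 * (δ + a + s)) ^ (p-2) :=
            (Real.mul_rpow (by norm_num) hpos.le).symm
        _ ≤ (δ + b + s) ^ (p-2) :=
            Real.rpow_le_rpow_of_nonpos (by linarith) (by linarith) (by linarith)
    calc (δ + a + s) ^ (p-2)
        = 17 ^ (2-p) * (17 ^ (p-2) * (δ + a + s) ^ (p-2)) := by
          rw [← mul_assoc, show (17:ℝ) ^ (2-p) * 17 ^ (p-2) = 1 by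
            rw [← Real.rpow_add (by norm_num)]; norm_num, one_mul]
      _ ≤ 17 ^ (2-p) * (δ + b + s) ^ (p-2) :=
          mul_le_mul_of_nonneg_left hbd (Real.rpow_nonneg (by norm_num) _)
  calc (δ + a + s) ^ (p-2) * s ≤ (17 ^ (2-p) * (δ + b + s) ^ (p-2)) * s :=
        mul_le_mul_of_nonneg_right h2 hs.1
    _ = 17 ^ (2-p) * ((δ + b + s) ^ (p-2) * s) := by ring

lemma sixteen_rpow {p : ℝ} (hp : 1 ≤ p) : (4:ℝ) ≤ 16 ^ (p/2) := by
  have h16 : (16:ℝ) = 2 ^ (4:ℝ) := by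
    rw [show (4:ℝ) = ((4:ℕ):ℝ) by norm_num, Real.rpow_natCast]; norm_num
  have h2 : (16:ℝ) ^ (p/2) = 2 ^ (2*p) := by
    rw [h16, ← Real.rpow_mul (by norm_num)]; ring_nf
  rw [h2]
  calc (4:ℝ) = 2 ^ (2:ℝ) := by
        rw [show (2:ℝ) = ((2:ℕ):ℝ) by norm_num, Real.rpow_natCast]; norm_num
    _ ≤ 2 ^ (2*p) := Real.rpow_le_rpow_of_exponent_le one_le_two (by linarith)

lemma Gbound_ge2 {δ p a b G : ℝ} (hp2 : 2 ≤ p) (hδ : 0 ≤ δ) (hb : 0 ≤ b)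
    (hfar : 16 * (δ + b) < a)
    (hG : |(δ + a) ^ ((p-2)/2) * a - (δ + b) ^ ((p-2)/2) * b| ≤ G) :
    a ^ p / 4 ≤ G ^ 2 := by
  have ha : 0 < a := by linarith
  have hFA : a ^ (p/2) ≤ (δ + a) ^ ((p-2)/2) * a := by
    calc a ^ (p/2) = a ^ ((p-2)/2) * a := by
          rw [← Real.rpow_add_one ha.ne']; ring_nf
      _ ≤ (δ + a) ^ ((p-2)/2) * a :=
          mul_le_mul_of_nonneg_right
            (Real.rpow_le_rpow ha.le (by linarith) (by linarith)) ha.le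
  have hFB : (δ + b) ^ ((p-2)/2) * b ≤ a ^ (p/2) / 4 := by
    rcases eq_or_lt_of_le (show (0:ℝ) ≤ δ + b by linarith) with h0 | h0
    · rw [show b = 0 by linarith, mul_zero]
      positivity
    calc (δ + b) ^ ((p-2)/2) * b ≤ (δ + b) ^ ((p-2)/2) * (δ + b) :=
          mul_le_mul_of_nonneg_left (by linarith) (Real.rpow_nonneg h0.le _)
      _ = (δ + b) ^ (p/2) := by rw [← Real.rpow_add_one h0.ne']; ring_nf
      _ ≤ (a/16) ^ (p/2) := Real.rpow_le_rpow h0.le (by linarith) (by linarith)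
      _ = a ^ (p/2) / 16 ^ (p/2) := Real.div_rpow ha.le (show (0:ℝ) ≤ 16 by norm_num) (p/2)
      _ ≤ a ^ (p/2) / 4 := by
          apply div_le_div_of_nonneg_left (Real.rpow_nonneg ha.le _) (by norm_num)
            (sixteen_rpow (by linarith))
  have hGge : a ^ (p/2) / 2 ≤ G := by
    have hnn : 0 ≤ a ^ (p/2) := Real.rpow_nonneg ha.le _
    have h1 : (δ + a) ^ ((p-2)/2) * a - (δ + b) ^ ((p-2)/2) * b ≤ G :=
      le_trans (le_abs_self _) hG
    linarith
  have hsq : a ^ (p/2) * a ^ (p/2) = a ^ p := by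
    rw [← Real.rpow_add ha]; ring_nf
  have hnn : 0 ≤ a ^ (p/2) := Real.rpow_nonneg ha.le _
  nlinarith [sq_nonneg (G - a ^ (p/2) / 2)]

lemma Gbound_lt2 {δ p a b G : ℝ} (hp : 1 < p) (hp2 : p < 2) (hδ : 0 ≤ δ) (ha : 0 ≤ a)
    (hfar : 16 * (δ + a) < b)
    (hG : |(δ + a) ^ ((p-2)/2) * a - (δ + b) ^ ((p-2)/2) * b| ≤ G) :
    b ^ p / 16 ≤ G ^ 2 := by
  have hb : 0 < b := by linarith
  have hδb : 0 < δ + b := by linarith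
  have hFB : b ^ (p/2) / 2 ≤ (δ + b) ^ ((p-2)/2) * b := by
    have h1 : (2:ℝ)⁻¹ ≤ 2 ^ ((p-2)/2) := by
      calc (2:ℝ)⁻¹ = 2 ^ (-1:ℝ) := (Real.rpow_neg_one 2).symm
        _ ≤ 2 ^ ((p-2)/2) := Real.rpow_le_rpow_of_exponent_le one_le_two (by linarith)
    have h2 : (2:ℝ) ^ ((p-2)/2) * b ^ ((p-2)/2) ≤ (δ + b) ^ ((p-2)/2) := by
      rw [← Real.mul_rpow (by norm_num) hb.le]
      exact Real.rpow_le_rpow_of_nonpos hδb (by linarith) (by linarith)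
    have h3 : (2:ℝ)⁻¹ * b ^ ((p-2)/2) ≤ (δ + b) ^ ((p-2)/2) := by
      calc (2:ℝ)⁻¹ * b ^ ((p-2)/2) ≤ 2 ^ ((p-2)/2) * b ^ ((p-2)/2) :=
            mul_le_mul_of_nonneg_right h1 (Real.rpow_nonneg hb.le _)
        _ ≤ _ := h2
    calc b ^ (p/2) / 2 = ((2:ℝ)⁻¹ * b ^ ((p-2)/2)) * b := by
          rw [mul_assoc, ← Real.rpow_add_one hb.ne']; ring_nf
      _ ≤ (δ + b) ^ ((p-2)/2) * b := mul_le_mul_of_nonneg_right h3 hb.le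
  have hFA : (δ + a) ^ ((p-2)/2) * a ≤ b ^ (p/2) / 4 := by
    rcases eq_or_lt_of_le (show (0:ℝ) ≤ δ + a by linarith) with h0 | h0
    · rw [show a = 0 by linarith, mul_zero]
      positivity
    calc (δ + a) ^ ((p-2)/2) * a ≤ (δ + a) ^ ((p-2)/2) * (δ + a) :=
          mul_le_mul_of_nonneg_left (by linarith) (Real.rpow_nonneg h0.le _)
      _ = (δ + a) ^ (p/2) := by rw [← Real.rpow_add_one h0.ne']; ring_nf
      _ ≤ (b/16) ^ (p/2) := Real.rpow_le_rpow h0.le (by linarith) (by linarith)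
      _ = b ^ (p/2) / 16 ^ (p/2) := Real.div_rpow hb.le (show (0:ℝ) ≤ 16 by norm_num) (p/2)
      _ ≤ b ^ (p/2) / 4 := by
          apply div_le_div_of_nonneg_left (Real.rpow_nonneg hb.le _) (by norm_num)
            (sixteen_rpow (by linarith))
  have hGge : b ^ (p/2) / 4 ≤ G := by
    have h1 : (δ + b) ^ ((p-2)/2) * b - (δ + a) ^ ((p-2)/2) * a ≤ G := by
      rw [abs_sub_comm] at hG
      exact le_trans (le_abs_self _) hG
    linarith
  have hsq : b ^ (p/2) * b ^ (p/2) = b ^ p := by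
    rw [← Real.rpow_add hb]; ring_nf
  nlinarith [sq_nonneg (G - b ^ (p/2) / 4), Real.rpow_nonneg hb.le (p/2)]

set_option maxHeartbeats 1000000 in
lemma scalar_key (δ pm pp ε : ℝ) (hδ : 0 ≤ δ) (hpm : 1 < pm) (hpmpp : pm ≤ pp)
    (hε : 0 < ε) :
    ∃ cε : ℝ, 1 ≤ cε ∧ ∀ p : ℝ, pm ≤ p → p ≤ pp → ∀ a b : ℝ, 0 ≤ a → 0 ≤ b →
      ∀ r : ℝ, 0 ≤ r → ∀ G : ℝ,
      |(δ + a) ^ ((p-2)/2) * a - (δ + b) ^ ((p-2)/2) * b| ≤ G →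
      phiShift δ p a r ≤ cε * phiShift δ p b r + ε * G ^ 2 := by
  have h2pp : (0:ℝ) < 2 ^ (pp + 2) := Real.rpow_pos_of_pos (by norm_num) _
  obtain ⟨m, hm0, hm1, hm2⟩ : ∃ m : ℝ, 0 < m ∧ m ≤ 1 ∧ m ≤ ε / 2 ^ (pp + 2) :=
    ⟨min 1 (ε / 2 ^ (pp + 2)), lt_min one_pos (div_pos hε h2pp), min_le_left _ _,
      min_le_right _ _⟩
  obtain ⟨θ, hθ_def⟩ : ∃ θ : ℝ, θ = m ^ pp := ⟨_, rfl⟩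
  obtain ⟨ε₀, hε₀0', hε₀1, hε₀2⟩ : ∃ e : ℝ, 0 < e ∧ e ≤ 1 ∧ e ≤ ε / 16 :=
    ⟨min 1 (ε / 16), lt_min one_pos (by positivity), min_le_left _ _, min_le_right _ _⟩
  have hθ0 : 0 < θ := hθ_def ▸ Real.rpow_pos_of_pos hm0 _
  have hθ1 : θ ≤ 1 := hθ_def ▸ Real.rpow_le_one hm0.le hm1 (by linarith)
  have hε₀0 : 0 < ε₀ := hε₀0'
  have h17pp : (0:ℝ) < 17 ^ pp := Real.rpow_pos_of_pos (by norm_num) _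
  have h2pp' : (0:ℝ) < 2 ^ pp := Real.rpow_pos_of_pos (by norm_num) _
  have hpp1 : 1 < pp := lt_of_lt_of_le hpm hpmpp
  refine ⟨17 ^ pp + 2 ^ pp + 2 ^ pp * pp / θ + 6 / ε₀ + 1, ?_, ?_⟩
  · have h1 : (0:ℝ) ≤ 2 ^ pp * pp / θ := by positivity
    have h2 : (0:ℝ) ≤ 6 / ε₀ := by positivity
    linarith
  intro p hppm hppp a b ha hb r hr G hGh
  generalize hcε_def : (17 ^ pp + 2 ^ pp + 2 ^ pp * pp / θ + 6 / ε₀ + 1 : ℝ) = cε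
  have hp : 1 < p := lt_of_lt_of_le hpm hppm
  have hp0 : (0:ℝ) < p := by linarith
  have hG0 : 0 ≤ G := le_trans (abs_nonneg _) hGh
  have hG2 : (0:ℝ) ≤ G ^ 2 := sq_nonneg G
  have hΦb : 0 ≤ phiShift δ p b r := phiShift_nonneg hδ hb hr
  have hq1 : (0:ℝ) ≤ 2 ^ pp * pp / θ := by positivity
  have hq2 : (0:ℝ) ≤ 6 / ε₀ := by positivity
  have hεG2 : 0 ≤ ε * G ^ 2 := mul_nonneg hε.le hG2
  rcases le_or_gt 2 p with hp2 | hp2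
  · -- case 2 ≤ p
    rcases le_or_gt a (16 * (δ + b)) with hnear | hfar
    · have h1 := near_ge2 hp hp2 hδ ha hb hr hnear
      have h2 : (17:ℝ) ^ (p - 2) ≤ 17 ^ pp :=
        Real.rpow_le_rpow_of_exponent_le (by norm_num) (by linarith)
      have h3 : (17:ℝ) ^ (p - 2) * phiShift δ p b r ≤ cε * phiShift δ p b r := by
        apply mul_le_mul_of_nonneg_right _ hΦb
        rw [← hcε_def]; linarith
      linarith
    · -- far case
      have ha0 : 0 < a := by linarith
      have hGb := Gbound_ge2 hp2 hδ hb hfar hGh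
      have hsplit := phi_split_ge2 hp hp2 hδ ha hb hr
      have h2le : (2:ℝ) ^ (p - 2) ≤ 2 ^ pp :=
        Real.rpow_le_rpow_of_exponent_le (by norm_num) (by linarith)
      have hap : (0:ℝ) < a ^ p := Real.rpow_pos_of_pos ha0 _
      have harp : (0:ℝ) ≤ a ^ (p-2) * r ^ 2 :=
        mul_nonneg (Real.rpow_nonneg ha _) (sq_nonneg r)
      have hT : 2 ^ (p-2) * a ^ (p-2) * (r ^ 2 / 2)
          ≤ 2 ^ pp * pp / θ * phiShift δ p b r + ε * (a ^ p / 4) := by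
        by_cases hc : r ^ p ≤ θ * a ^ p
        · -- small r
          have hr2 : r ^ 2 ≤ θ ^ (2/p) * a ^ 2 := by
            have e1 : (r:ℝ) ^ (2:ℝ) = (r ^ p) ^ (2/p) := by
              rw [← Real.rpow_mul hr, show p * (2/p) = 2 by field_simp]
            have e2 : (r ^ p) ^ (2/p) ≤ (θ * a ^ p) ^ (2/p) :=
              Real.rpow_le_rpow (Real.rpow_nonneg hr _) hc (by positivity)
            have e3 : (θ * a ^ p) ^ (2/p) = θ ^ (2/p) * a ^ (2:ℝ) := by
              rw [Real.mul_rpow hθ0.le (Real.rpow_nonneg ha _), ← Real.rpow_mul ha,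
                show p * (2/p) = 2 by field_simp]
            calc r ^ 2 = (r:ℝ) ^ (2:ℝ) := (Real.rpow_two r).symm
              _ = (r ^ p) ^ (2/p) := e1
              _ ≤ θ ^ (2/p) * a ^ (2:ℝ) := e3 ▸ e2
              _ = θ ^ (2/p) * a ^ 2 := by rw [Real.rpow_two]
          have hθ2p : θ ^ (2/p) ≤ m := by
            have e1 : θ ^ (2/p) = m ^ (pp * (2/p)) := by
              rw [hθ_def, ← Real.rpow_mul hm0.le]
            have e2 : (1:ℝ) ≤ pp * (2/p) := by
              rw [mul_div_assoc', le_div_iff₀ hp0]; linarith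
            rw [e1]
            calc m ^ (pp * (2/p)) ≤ m ^ (1:ℝ) :=
                  Real.rpow_le_rpow_of_exponent_ge hm0 hm1 e2
              _ = m := Real.rpow_one m
          have haa : a ^ (p-2) * a ^ 2 = a ^ p := by
            rw [← Real.rpow_two, ← Real.rpow_add ha0]; ring_nf
          have e4 : a ^ (p-2) * r ^ 2 ≤ m * a ^ p := by
            have e41 : a ^ (p-2) * r ^ 2 ≤ a ^ (p-2) * (θ ^ (2/p) * a ^ 2) :=
              mul_le_mul_of_nonneg_left hr2 (Real.rpow_nonneg ha _)
            have e42 : a ^ (p-2) * (θ ^ (2/p) * a ^ 2) = θ ^ (2/p) * a ^ p := by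
              rw [← haa]; ring
            have e43 : θ ^ (2/p) * a ^ p ≤ m * a ^ p :=
              mul_le_mul_of_nonneg_right hθ2p hap.le
            linarith
          have e5 : 2 ^ pp * m ≤ ε / 4 := by
            have h7 : (2:ℝ) ^ (pp + 2) = 2 ^ pp * 4 := by
              rw [Real.rpow_add (by norm_num : (0:ℝ) < 2)]
              norm_num [Real.rpow_two]
            calc 2 ^ pp * m ≤ 2 ^ pp * (ε / 2 ^ (pp + 2)) :=
                  mul_le_mul_of_nonneg_left hm2 h2pp'.le
              _ = ε / 4 := by rw [h7]; field_simp
          have e6 : 2 ^ (p-2) * (a ^ (p-2) * r ^ 2) ≤ 2 ^ pp * (m * a ^ p) :=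
            mul_le_mul h2le e4 harp h2pp'.le
          have e7 : 2 ^ pp * (m * a ^ p) ≤ ε / 4 * a ^ p := by
            have : 2 ^ pp * (m * a ^ p) = (2 ^ pp * m) * a ^ p := by ring
            rw [this]
            exact mul_le_mul_of_nonneg_right e5 hap.le
          have e8 : (0:ℝ) ≤ 2 ^ pp * pp / θ * phiShift δ p b r := mul_nonneg hq1 hΦb
          have e10 : (0:ℝ) ≤ ε / 4 * a ^ p := mul_nonneg (by linarith) hap.le
          linarith
        · -- large r
          push_neg at hc
          have hθa : 0 < θ * a ^ p := mul_pos hθ0 hap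
          have hr0 : 0 < r := by
            rcases eq_or_lt_of_le hr with h0 | h0
            · exfalso
              rw [← h0, Real.zero_rpow hp0.ne'] at hc
              linarith
            · exact h0
          have step1 : θ ^ (1/p) * a ≤ r := by
            by_contra h
            push_neg at h
            have i1 : r ^ p ≤ (θ ^ (1/p) * a) ^ p :=
              Real.rpow_le_rpow hr h.le hp0.le
            have i2 : (θ ^ (1/p) * a) ^ p = θ * a ^ p := by
              rw [Real.mul_rpow (Real.rpow_nonneg hθ0.le _) ha,
                ← Real.rpow_mul hθ0.le, show 1/p * p = 1 by field_simp, Real.rpow_one]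
            rw [i2] at i1
            linarith
          have step2 : θ * a ^ (p-2) ≤ r ^ (p-2) := by
            have i1 : θ ≤ θ ^ ((p-2)/p) := by
              calc θ = θ ^ (1:ℝ) := (Real.rpow_one θ).symm
                _ ≤ θ ^ ((p-2)/p) := Real.rpow_le_rpow_of_exponent_ge hθ0 hθ1
                    (by rw [div_le_one hp0]; linarith)
            have i2 : θ ^ ((p-2)/p) * a ^ (p-2) = (θ ^ (1/p) * a) ^ (p-2) := by
              rw [Real.mul_rpow (Real.rpow_nonneg hθ0.le _) ha, ← Real.rpow_mul hθ0.le,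
                show 1/p * (p-2) = (p-2)/p by ring]
            have i3 : (θ ^ (1/p) * a) ^ (p-2) ≤ r ^ (p-2) :=
              Real.rpow_le_rpow (by positivity) step1 (by linarith)
            calc θ * a ^ (p-2) ≤ θ ^ ((p-2)/p) * a ^ (p-2) :=
                  mul_le_mul_of_nonneg_right i1 (Real.rpow_nonneg ha _)
              _ = (θ ^ (1/p) * a) ^ (p-2) := i2
              _ ≤ r ^ (p-2) := i3
          have step3 : r ^ (p-2) * r ^ 2 = r ^ p := by
            rw [← Real.rpow_two, ← Real.rpow_add hr0]; ring_nf
          have step4 : r ^ p ≤ pp * phiShift δ p b r := by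
            have i1 := phi_ge_rpow hp hp2 hδ hb hr
            rw [div_le_iff₀ hp0] at i1
            have i2 : phiShift δ p b r * p ≤ phiShift δ p b r * pp :=
              mul_le_mul_of_nonneg_left (by linarith) hΦb
            linarith
          have step5 : θ * (a ^ (p-2) * r ^ 2) ≤ pp * phiShift δ p b r := by
            have i1 : θ * a ^ (p-2) * r ^ 2 ≤ r ^ (p-2) * r ^ 2 :=
              mul_le_mul_of_nonneg_right step2 (sq_nonneg r)
            rw [step3] at i1
            have i2 : θ * (a ^ (p-2) * r ^ 2) = θ * a ^ (p-2) * r ^ 2 := by ring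
            rw [i2]
            linarith
          have step6 : a ^ (p-2) * r ^ 2 ≤ pp * phiShift δ p b r / θ := by
            rw [le_div_iff₀ hθ0]
            have i3 : a ^ (p-2) * r ^ 2 * θ = θ * (a ^ (p-2) * r ^ 2) := by ring
            rw [i3]
            exact step5
          have e6 : 2 ^ (p-2) * (a ^ (p-2) * r ^ 2) ≤ 2 ^ pp * (pp * phiShift δ p b r / θ) :=
            mul_le_mul h2le step6 harp h2pp'.le
          have e7 : 0 ≤ ε * (a ^ p / 4) := mul_nonneg hε.le (by positivity)
          have e8 : 2 ^ pp * (pp * phiShift δ p b r / θ) = 2 ^ pp * pp / θ * phiShift δ p b r := by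
            ring
          rw [e8] at e6
          have e9 : (0:ℝ) ≤ 2 ^ pp * pp / θ * phiShift δ p b r := mul_nonneg hq1 hΦb
          linarith
      -- combine far case
      have hf1 : 2 ^ (p-2) * phiShift δ p b r ≤ 2 ^ pp * phiShift δ p b r :=
        mul_le_mul_of_nonneg_right h2le hΦb
      have hf2 : ε * (a ^ p / 4) ≤ ε * G ^ 2 :=
        mul_le_mul_of_nonneg_left (by linarith) hε.le
      have hf3 : (2 ^ pp + 2 ^ pp * pp / θ) * phiShift δ p b r ≤ cε * phiShift δ p b r := by
        apply mul_le_mul_of_nonneg_right _ hΦb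
        rw [← hcε_def]; linarith
      have hf4 : (0:ℝ) ≤ 17 ^ pp * phiShift δ p b r := mul_nonneg h17pp.le hΦb
      have hf5 : (0:ℝ) ≤ 6 / ε₀ * phiShift δ p b r := mul_nonneg hq2 hΦb
      linarith
  · -- case p < 2
    rcases le_or_gt b (16 * (δ + a)) with hnear | hfar
    · have h1 := near_lt2 hp hp2 hδ ha hb hr hnear
      have h2 : (17:ℝ) ^ (2 - p) ≤ 17 ^ pp :=
        Real.rpow_le_rpow_of_exponent_le (by norm_num) (by linarith)
      have h3 : (17:ℝ) ^ (2 - p) * phiShift δ p b r ≤ cε * phiShift δ p b r := by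
        apply mul_le_mul_of_nonneg_right _ hΦb
        rw [← hcε_def]; linarith
      linarith
    · -- far case, p < 2
      have hb0 : 0 < b := by linarith
      have hGb := Gbound_lt2 hp hp2 hδ ha hfar hGh
      have hbp : (0:ℝ) < b ^ p := Real.rpow_pos_of_pos hb0 _
      have hrp : (0:ℝ) ≤ r ^ p := Real.rpow_nonneg hr _
      have hΦa_le : phiShift δ p a r ≤ r ^ p := by
        have i1 := phi_le_rpow hp hp2 hδ ha hr
        have i2 : r ^ p / p ≤ r ^ p := by
          rw [div_le_iff₀ hp0]
          have := mul_le_mul_of_nonneg_left (show (1:ℝ) ≤ p by linarith) hrp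
          linarith
        linarith
      have hcε0 : (0:ℝ) ≤ cε := by rw [← hcε_def]; linarith
      have hcεΦb : 0 ≤ cε * phiShift δ p b r := mul_nonneg hcε0 hΦb
      by_cases hc : r ^ p ≤ ε₀ * b ^ p
      · have i1 : ε₀ * b ^ p ≤ ε / 16 * b ^ p :=
          mul_le_mul_of_nonneg_right hε₀2 hbp.le
        have i2 : ε / 16 * b ^ p = ε * (b ^ p / 16) := by ring
        have i3 : ε * (b ^ p / 16) ≤ ε * G ^ 2 :=
          mul_le_mul_of_nonneg_left hGb hε.le
        linarith
      · push_neg at hc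
        have hr0 : 0 < r := by
          rcases eq_or_lt_of_le hr with h0 | h0
          · exfalso
            rw [← h0, Real.zero_rpow hp0.ne'] at hc
            have := mul_pos hε₀0 hbp
            linarith
          · exact h0
        have he0 : 0 < ε₀ ^ (1/p) := Real.rpow_pos_of_pos hε₀0 _
        have he1 : ε₀ ^ (1/p) ≤ 1 := Real.rpow_le_one hε₀0.le hε₀1 (by positivity)
        have step1 : ε₀ ^ (1/p) * b ≤ r := by
          by_contra h
          push_neg at h
          have i1 : r ^ p ≤ (ε₀ ^ (1/p) * b) ^ p :=
            Real.rpow_le_rpow hr h.le hp0.le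
          have i2 : (ε₀ ^ (1/p) * b) ^ p = ε₀ * b ^ p := by
            rw [Real.mul_rpow (Real.rpow_nonneg hε₀0.le _) hb,
              ← Real.rpow_mul hε₀0.le, show 1/p * p = 1 by field_simp, Real.rpow_one]
          rw [i2] at i1
          linarith
        have hbr : b ≤ r / ε₀ ^ (1/p) := by
          rw [le_div_iff₀ he0]
          have i1 : b * ε₀ ^ (1/p) = ε₀ ^ (1/p) * b := by ring
          rw [i1]
          exact step1
        have hrr : r ≤ r / ε₀ ^ (1/p) := by
          rw [le_div_iff₀ he0]
          have := mul_le_mul_of_nonneg_left he1 hr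
          linarith
        have hδb : δ ≤ b := by linarith
        have hxr : δ + b + r ≤ 3 / ε₀ ^ (1/p) * r := by
          have : 3 / ε₀ ^ (1/p) * r = 3 * (r / ε₀ ^ (1/p)) := by ring
          rw [this]
          linarith
        have hx1 : (1:ℝ) ≤ 3 / ε₀ ^ (1/p) := by
          rw [le_div_iff₀ he0]
          linarith
        have hquad := phi_ge_quad hp hp2 hδ hb hr
        have hpow : ε₀ / 3 * r ^ (p-2) ≤ (δ + b + r) ^ (p-2) := by
          have i1 : (3 / ε₀ ^ (1/p) * r) ^ (p-2) ≤ (δ + b + r) ^ (p-2) :=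
            Real.rpow_le_rpow_of_nonpos (by linarith) hxr (by linarith)
          have i2 : (3 / ε₀ ^ (1/p) * r) ^ (p-2)
              = (3 / ε₀ ^ (1/p)) ^ (p-2) * r ^ (p-2) :=
            Real.mul_rpow (by positivity) hr0.le
          have i3 : (3 / ε₀ ^ (1/p)) ^ (-1:ℝ) ≤ (3 / ε₀ ^ (1/p)) ^ (p-2) :=
            Real.rpow_le_rpow_of_exponent_le hx1 (by linarith)
          have i4 : (3 / ε₀ ^ (1/p)) ^ (-1:ℝ) = ε₀ ^ (1/p) / 3 := by
            rw [Real.rpow_neg_one, inv_div]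
          have i5 : ε₀ ≤ ε₀ ^ (1/p) := by
            calc ε₀ = ε₀ ^ (1:ℝ) := (Real.rpow_one ε₀).symm
              _ ≤ ε₀ ^ (1/p) := Real.rpow_le_rpow_of_exponent_ge hε₀0 hε₀1
                  (by rw [div_le_one hp0]; linarith)
          have i6 : ε₀ / 3 ≤ (3 / ε₀ ^ (1/p)) ^ (p-2) := by
            rw [i4] at i3
            linarith
          have i7 : ε₀ / 3 * r ^ (p-2) ≤ (3 / ε₀ ^ (1/p)) ^ (p-2) * r ^ (p-2) :=
            mul_le_mul_of_nonneg_right i6 (Real.rpow_nonneg hr _)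
          rw [← i2] at i7
          linarith
        have step3 : r ^ (p-2) * r ^ 2 = r ^ p := by
          rw [← Real.rpow_two, ← Real.rpow_add hr0]; ring_nf
        have hΦb_ge : ε₀ / 6 * r ^ p ≤ phiShift δ p b r := by
          have i1 : ε₀ / 3 * r ^ (p-2) * (r ^ 2 / 2) ≤ (δ + b + r) ^ (p-2) * (r ^ 2 / 2) :=
            mul_le_mul_of_nonneg_right hpow (by positivity)
          have i2 : ε₀ / 3 * r ^ (p-2) * (r ^ 2 / 2) = ε₀ / 6 * (r ^ (p-2) * r ^ 2) := by
            ring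
          rw [i2, step3] at i1
          linarith
        have hfin : r ^ p ≤ 6 / ε₀ * phiShift δ p b r := by
          rw [show r ^ p = 6 / ε₀ * (ε₀ / 6 * r ^ p) by field_simp]
          exact mul_le_mul_of_nonneg_left hΦb_ge (by positivity)
        have h6cε : 6 / ε₀ * phiShift δ p b r ≤ cε * phiShift δ p b r := by
          apply mul_le_mul_of_nonneg_right _ hΦb
          rw [← hcε_def]; linarith
        linarith

theorem stmt10 (d : ℕ) (hd : 1 ≤ d) (δ pm pp : ℝ) (hδ : 0 ≤ δ) (hpm : 1 < pm)
    (hpmpp : pm ≤ pp) :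
    ∀ ε : ℝ, 0 < ε → ∃ cε : ℝ, 1 ≤ cε ∧
      ∀ p : ℝ, pm ≤ p → p ≤ pp → ∀ A B : Matrix (Fin d) (Fin d) ℝ, ∀ r : ℝ, 0 ≤ r →
        phiShift δ p (frob (msym A)) r ≤
          cε * phiShift δ p (frob (msym B)) r +
            ε * frob (Fmap δ p A - Fmap δ p B) ^ 2 := by
  intro ε hε
  obtain ⟨cε, hcε1, hkey⟩ := scalar_key δ pm pp ε hδ hpm hpmpp hε
  refine ⟨cε, hcε1, ?_⟩
  intro p hpmp hppp A B r hr
  apply hkey p hpmp hppp (frob (msym A)) (frob (msym B)) (frob_nonneg _) (frob_nonneg _)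
    r hr (frob (Fmap δ p A - Fmap δ p B))
  have hFA : frob (Fmap δ p A) = (δ + frob (msym A)) ^ ((p-2)/2) * frob (msym A) := by
    rw [Fmap, frob_smul, abs_of_nonneg (Real.rpow_nonneg (by linarith [frob_nonneg (msym A)]) _)]
  have hFB : frob (Fmap δ p B) = (δ + frob (msym B)) ^ ((p-2)/2) * frob (msym B) := by
    rw [Fmap, frob_smul, abs_of_nonneg (Real.rpow_nonneg (by linarith [frob_nonneg (msym B)]) _)]
  calc |(δ + frob (msym A)) ^ ((p-2)/2) * frob (msym A)
        - (δ + frob (msym B)) ^ ((p-2)/2) * frob (msym B)|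
      = |frob (Fmap δ p A) - frob (Fmap δ p B)| := by rw [hFA, hFB]
    _ ≤ frob (Fmap δ p A - Fmap δ p B) := frob_rev_triangle _ _
end

section
/- ε-Young inequality: Let ψ : ℝ≥0 → ℝ≥0 be an N-function such that both ψ and its Fenchel conjugate ψ* satisfy the Δ₂-condition, with Δ₂-constants Δ₂(ψ) and Δ₂(ψ*). Then for every ε > 0 there exists a constant c_ε > 0, depending only on ε, Δ₂(ψ) and Δ₂(ψ*), such that for all r, s ≥ 0: s·r ≤ c_ε ψ*(s) + ε ψ(r). -/
open MeasureTheory Filter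

/-!
Write `t * r = (t / a) * (a * r)` with `a = min ε 1`. Young's inequality for the pair `ψ, ψ*`
bounds this by `ψ*(t / a) + ψ(a r)`. Convexity and `ψ 0 = 0` give `ψ(a r) ≤ a ψ(r) ≤ ε ψ(r)`,
and since `1 / a ≤ 2 ^ k` for some `k`, monotonicity and `k` applications of the Δ₂-condition
give `ψ*(t / a) ≤ Δ₂(ψ*) ^ k ψ*(t)`.
-/

lemma ConvexOn.map_mul_le_mul {ψ : ℝ → ℝ} (hψ : ConvexOn ℝ (Set.Ici 0) ψ) (h0 : ψ 0 ≤ 0)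
    {a r : ℝ} (ha₀ : 0 ≤ a) (ha₁ : a ≤ 1) (hr : 0 ≤ r) : ψ (a * r) ≤ a * ψ r := by
  have h := hψ.2 (Set.mem_Ici.mpr hr) Set.self_mem_Ici ha₀ (sub_nonneg.mpr ha₁) (by ring)
  simp only [smul_eq_mul, mul_zero, add_zero] at h
  nlinarith

lemma pow_mul_le_pow_mul_of_two_mul_le {f : ℝ → ℝ} {C : ℝ} (hC : 0 ≤ C)
    (hf : ∀ r, 0 ≤ r → f (2 * r) ≤ C * f r) (n : ℕ) {r : ℝ} (hr : 0 ≤ r) :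
    f (2 ^ n * r) ≤ C ^ n * f r := by
  induction n with
  | zero => simp
  | succ n ih =>
    calc f (2 ^ (n + 1) * r) = f (2 * (2 ^ n * r)) := by ring_nf
      _ ≤ C * f (2 ^ n * r) := hf _ (by positivity)
      _ ≤ C * (C ^ n * f r) := mul_le_mul_of_nonneg_left ih hC
      _ = C ^ (n + 1) * f r := by ring

section FenchelConjugate

variable {ψ : ℝ → ℝ}

lemma bddAbove_range_mul_sub_of_tendsto_div_atTop (hψ : ∀ s, 0 ≤ s → 0 ≤ ψ s)
    (hinf : Tendsto (fun s => ψ s / s) atTop atTop) (u : ℝ) :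
    BddAbove (Set.range fun s : NNReal => u * (s : ℝ) - ψ s) := by
  obtain ⟨M, hM⟩ := eventually_atTop.mp (hinf.eventually_ge_atTop u)
  refine ⟨|u| * max M 1, ?_⟩
  rintro _ ⟨s, rfl⟩
  have hs : (0 : ℝ) ≤ s := s.2
  have hbound : 0 ≤ |u| * max M 1 := mul_nonneg (abs_nonneg u) (by positivity)
  rcases le_or_gt (s : ℝ) (max M 1) with hsM | hsM
  · have : u * s ≤ |u| * max M 1 :=
      (mul_le_mul_of_nonneg_right (le_abs_self u) hs).trans
        (mul_le_mul_of_nonneg_left hsM (abs_nonneg u))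
    linarith [hψ s hs]
  · have hs₀ : (0 : ℝ) < s := lt_of_lt_of_le one_pos ((le_max_right M 1).trans hsM.le)
    have : u * s ≤ ψ s := (le_div_iff₀ hs₀).mp (hM s ((le_max_left M 1).trans hsM.le))
    linarith

variable (hbdd : ∀ u, BddAbove (Set.range fun s : NNReal => u * (s : ℝ) - ψ s))
include hbdd

lemma mul_le_fconj_add {u v : ℝ} (hv : 0 ≤ v) : u * v ≤ fconj ψ u + ψ v := by
  have : u * v - ψ v ≤ fconj ψ u := le_ciSup (hbdd u) (⟨v, hv⟩ : NNReal)
  linarith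

lemma monotone_fconj : Monotone (fconj ψ) := fun _ _ huv =>
  ciSup_mono (hbdd _) fun s => sub_le_sub_right (mul_le_mul_of_nonneg_right huv s.2) _

end FenchelConjugate

theorem stmt16 (Δψ Δψs : ℝ) (ε : ℝ) (hε : 0 < ε) :
    ∃ cε : ℝ, 0 < cε ∧
      ∀ ψ : ℝ → ℝ,
        ConvexOn ℝ (Set.Ici (0 : ℝ)) ψ →
        ψ 0 = 0 →
        (∀ r : ℝ, 0 < r → 0 < ψ r) →
        Tendsto (fun r => ψ r / r) (nhdsWithin 0 (Set.Ioi (0 : ℝ))) (nhds 0) →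
        Tendsto (fun r => ψ r / r) atTop atTop →
        2 < Δψ → (∀ r : ℝ, 0 ≤ r → ψ (2 * r) ≤ Δψ * ψ r) →
        2 < Δψs → (∀ r : ℝ, 0 ≤ r → fconj ψ (2 * r) ≤ Δψs * fconj ψ r) →
        ∀ r : ℝ, 0 ≤ r → ∀ t : ℝ, 0 ≤ t →
          t * r ≤ cε * fconj ψ t + ε * ψ r := by
  set a := min ε 1
  have ha₀ : 0 < a := lt_min hε one_pos
  obtain ⟨k, hk⟩ : ∃ k : ℕ, 1 / a < 2 ^ k := pow_unbounded_of_one_lt _ one_lt_two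
  refine ⟨max Δψs 1 ^ k, pow_pos (lt_max_of_lt_right one_pos) k, ?_⟩
  intro ψ hconv h0 hpos _ hinf _ _ hΔψs hΔs r hr t ht
  have hψ : ∀ s, 0 ≤ s → 0 ≤ ψ s := fun s hs =>
    hs.eq_or_lt.elim (fun h => h ▸ h0.ge) fun h => (hpos s h).le
  have hbdd := bddAbove_range_mul_sub_of_tendsto_div_atTop hψ hinf
  rw [max_eq_left (by linarith)]
  have hyoung : t * r ≤ fconj ψ (t / a) + ψ (a * r) := by
    have h := mul_le_fconj_add hbdd (u := t / a) (v := a * r) (by positivity)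
    rwa [show t / a * (a * r) = t * r by field_simp] at h
  have hconj : fconj ψ (t / a) ≤ Δψs ^ k * fconj ψ t :=
    calc fconj ψ (t / a) ≤ fconj ψ (2 ^ k * t) := monotone_fconj hbdd <| by
          rw [div_eq_mul_one_div, mul_comm]; exact mul_le_mul_of_nonneg_right hk.le ht
      _ ≤ Δψs ^ k * fconj ψ t := pow_mul_le_pow_mul_of_two_mul_le (by linarith) hΔs k ht
  have hpsi : ψ (a * r) ≤ ε * ψ r :=
    (hconv.map_mul_le_mul h0.le ha₀.le (min_le_right _ _) hr).trans
      (mul_le_mul_of_nonneg_right (min_le_left _ _) (hψ r hr))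
  linarith
end

section
/- Let δ ≥ 0 and 1 < p⁻ ≤ p⁺ < ∞. There exists a constant c > 0, depending only on p⁻, p⁺ and δ, such that for every exponent p ∈ [p⁻, p⁺] with conjugate p' := p/(p−1), every shift a ≥ 0, every λ ∈ [0,1] and every r ≥ 0: ((φ_p)_a)*(λ r) ≤ c · λ^{min{2, p'}} · ((φ_p)_a)*(r). -/
/-!
For θ ≥ 1 the integrand g(s) = (δ+a+s)^{p-2} s satisfies g(θs) ≤ θ^{q-1} g(s) with
q = max 2 p, so φ = (φ_p)_a grows at most like φ(θt) ≤ θ^q φ(t). Substituting s = θu with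
θ = λ^{-1/(q-1)} in the supremum defining φ*(λr) turns this into φ*(λr) ≤ λ^{q/(q-1)} φ*(r),
and q/(q-1) = min 2 p'. Hence c = 1 works.
-/

open MeasureTheory

open Set Real Filter

lemma fconj_zero_nonpos {ψ : ℝ → ℝ} (hψ : ∀ t, 0 ≤ t → 0 ≤ ψ t) : fconj ψ 0 ≤ 0 :=
  ciSup_le fun s ↦ by simpa using hψ s s.2

lemma fconj_mul_le_rpow_of_growth {ψ : ℝ → ℝ} {q r lam : ℝ} (hq : 1 < q)
    (hψ : ∀ θ t, 1 ≤ θ → 0 ≤ t → ψ (θ * t) ≤ θ ^ q * ψ t)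
    (hbdd : BddAbove (range fun s : NNReal ↦ r * s - ψ s)) (hlam₀ : 0 < lam) (hlam₁ : lam ≤ 1) :
    fconj ψ (lam * r) ≤ lam ^ (q / (q - 1)) * fconj ψ r := by
  set Q := q / (q - 1)
  set θ := lam ^ (-(q - 1)⁻¹)
  have hQ : Q * (q - 1) = q := div_mul_cancel₀ q (by linarith)
  have hθ : 1 ≤ θ := one_le_rpow_of_pos_of_le_one_of_nonpos hlam₀ hlam₁
    (neg_nonpos.2 (inv_nonneg.2 (by linarith)))
  have hQθ : lam ^ Q * θ = lam := by
    rw [← rpow_add hlam₀]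
    convert rpow_one lam using 2
    field_simp [show q - 1 ≠ 0 by linarith]
    linear_combination hQ
  have hQθq : lam ^ Q * θ ^ q = 1 := by
    rw [← rpow_mul hlam₀.le, ← rpow_add hlam₀]
    convert rpow_zero lam using 2
    field_simp [show q - 1 ≠ 0 by linarith]
    linear_combination hQ
  refine ciSup_le fun s ↦ ?_
  have hθs : 0 ≤ θ * s := mul_nonneg (by linarith) s.2
  calc lam * r * s - ψ s
      ≤ lam ^ Q * (r * (θ * s)) - lam ^ Q * ψ (θ * s) := by
        have := mul_le_mul_of_nonneg_left (hψ θ s hθ s.2) (rpow_nonneg hlam₀.le Q)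
        rw [← mul_assoc, hQθq, one_mul] at this
        have hlin : lam * r * s = lam ^ Q * θ * r * s := by rw [hQθ]
        linarith
    _ = lam ^ Q * (r * (⟨θ * s, hθs⟩ : NNReal) - ψ (⟨θ * s, hθs⟩ : NNReal)) := by ring
    _ ≤ lam ^ Q * fconj ψ r :=
        mul_le_mul_of_nonneg_left (le_ciSup hbdd _) (rpow_nonneg hlam₀.le Q)

lemma min_two_div_sub_one_eq {p : ℝ} (hp : 1 < p) :
    min 2 (p / (p - 1)) = max 2 p / (max 2 p - 1) := by
  have hp1 : 0 < p - 1 := by linarith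
  rcases le_total p 2 with h | h
  · rw [max_eq_left h, min_eq_left ((le_div_iff₀ hp1).2 (by linarith))]
    norm_num
  · rw [max_eq_right h, min_eq_right ((div_le_iff₀ hp1).2 (by linarith))]

lemma bddAbove_range_mul_sub_integral {g : ℝ → ℝ} {r : ℝ} (hr : 0 ≤ r)
    (hg : ∀ x y, IntervalIntegrable g volume x y) (hg₀ : ∀ s, 0 ≤ s → 0 ≤ g s)
    (hgr : ∀ᶠ s in atTop, r ≤ g s) :
    BddAbove (range fun s : NNReal ↦ r * s - ∫ u in (0:ℝ)..s, g u) := by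
  obtain ⟨t₀, ht₀⟩ := eventually_atTop.1 hgr
  set t := max t₀ 0
  have hint : ∀ x y, 0 ≤ x → x ≤ y → 0 ≤ ∫ u in x..y, g u := fun x y hx hxy ↦
    intervalIntegral.integral_nonneg hxy fun u hu ↦ hg₀ u (hx.trans hu.1)
  refine ⟨r * t, forall_mem_range.2 fun s ↦ ?_⟩
  rcases le_total (s : ℝ) t with hst | hts
  · nlinarith [hint 0 s le_rfl s.2]
  · have hlin : r * (s - t) ≤ ∫ u in t..s, g u := by
      simpa [mul_comm] using intervalIntegral.integral_mono_on hts intervalIntegrable_const (hg t s)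
        fun u hu ↦ ht₀ u ((le_max_left _ _).trans hu.1)
    rw [← intervalIntegral.integral_add_adjacent_intervals (hg 0 t) (hg t s)]
    nlinarith [hint 0 t le_rfl (le_max_right _ _)]

lemma intervalIntegrable_add_rpow_sub_two_mul {p : ℝ} (hp : 1 < p) (b x y : ℝ) :
    IntervalIntegrable (fun s ↦ (b + s) ^ (p - 2) * s) volume x y := by
  have h := (intervalIntegral.intervalIntegrable_rpow' (r := p - 2) (a := b + x) (b := b + y)
    (by linarith)).comp_add_left b
  simp only [add_sub_cancel_left] at h
  exact h.mul_continuousOn continuousOn_id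

lemma add_mul_rpow_sub_two_le {b p θ u : ℝ} (hb : 0 ≤ b) (hθ : 1 ≤ θ) (hu : 0 ≤ u) :
    (b + θ * u) ^ (p - 2) ≤ θ ^ (max 2 p - 2) * (b + u) ^ (p - 2) := by
  rcases le_total 2 p with h2 | h2
  · rw [max_eq_right h2, ← mul_rpow (by linarith) (by linarith)]
    exact rpow_le_rpow (by positivity) (by nlinarith) (by linarith)
  · rw [max_eq_left h2, sub_self, rpow_zero, one_mul]
    rcases (add_nonneg hb hu).eq_or_lt with h0 | h0
    · obtain ⟨rfl, rfl⟩ : b = 0 ∧ u = 0 := ⟨by linarith, by linarith⟩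
      simp
    · exact rpow_le_rpow_of_nonpos h0 (by nlinarith) (by linarith)

lemma tendsto_add_rpow_sub_two_mul_atTop {b p : ℝ} (hb : 0 ≤ b) (hp : 1 < p) :
    Tendsto (fun s ↦ (b + s) ^ (p - 2) * s) atTop atTop := by
  have hlow : Tendsto (fun s ↦ (b + s) ^ (p - 1) / 2) atTop atTop :=
    ((tendsto_rpow_atTop (by linarith)).comp
      (tendsto_atTop_add_const_left _ b tendsto_id)).atTop_div_const two_pos
  refine tendsto_atTop_mono' _ ?_ hlow
  filter_upwards [eventually_ge_atTop (max b 1)] with s hs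
  have hbs : 0 < b + s := by linarith [le_max_right b 1]
  have hsplit : (b + s) ^ (p - 1) = (b + s) ^ (p - 2) * (b + s) := by
    rw [← rpow_add_one hbs.ne']; ring_nf
  rw [hsplit]
  nlinarith [rpow_pos_of_pos hbs (p - 2), le_max_left b 1]

lemma phiShift_mul_le {δ p a θ t : ℝ} (hb : 0 ≤ δ + a) (hp : 1 < p) (hθ : 1 ≤ θ) (ht : 0 ≤ t) :
    phiShift δ p a (θ * t) ≤ θ ^ max 2 p * phiShift δ p a t := by
  set g : ℝ → ℝ := fun s ↦ (δ + a + s) ^ (p - 2) * s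
  have hθ₀ : 0 < θ := by linarith
  have hg : ∀ x y, IntervalIntegrable g volume x y := intervalIntegrable_add_rpow_sub_two_mul hp _
  have hgθ : IntervalIntegrable (fun u ↦ g (θ * u)) volume 0 t := by
    simpa [hθ₀.ne'] using (hg 0 (θ * t)).comp_mul_left (c := θ)
  have hpoint : ∀ u ∈ Icc 0 t, g (θ * u) ≤ θ ^ (max 2 p - 1) * g u := fun u hu ↦ by
    have h := mul_le_mul_of_nonneg_right (add_mul_rpow_sub_two_le (p := p) hb hθ hu.1)
      (mul_nonneg hθ₀.le hu.1)
    have hexp : θ ^ (max 2 p - 1) = θ ^ (max 2 p - 2) * θ := by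
      rw [← rpow_add_one hθ₀.ne']; ring_nf
    simp only [g, hexp]
    linarith
  calc phiShift δ p a (θ * t) = θ * ∫ u in (0:ℝ)..t, g (θ * u) := by
        rw [← smul_eq_mul θ (∫ _ in _.._, _), intervalIntegral.smul_integral_comp_mul_left,
          mul_zero]
        rfl
    _ ≤ θ * ∫ u in (0:ℝ)..t, θ ^ (max 2 p - 1) * g u := by
        gcongr
        exact intervalIntegral.integral_mono_on ht hgθ ((hg 0 t).const_mul _) hpoint
    _ = θ ^ max 2 p * phiShift δ p a t := by
        rw [intervalIntegral.integral_const_mul, ← mul_assoc, mul_comm θ,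
          ← rpow_add_one hθ₀.ne', sub_add_cancel]
        rfl

lemma phiShift_nonneg_s18 {δ p a t : ℝ} (hb : 0 ≤ δ + a) (ht : 0 ≤ t) : 0 ≤ phiShift δ p a t :=
  intervalIntegral.integral_nonneg ht fun u hu ↦
    mul_nonneg (rpow_nonneg (by linarith [hu.1]) _) hu.1

lemma bddAbove_range_mul_sub_phiShift {δ p a r : ℝ} (hb : 0 ≤ δ + a) (hp : 1 < p) (hr : 0 ≤ r) :
    BddAbove (range fun s : NNReal ↦ r * s - phiShift δ p a s) :=
  bddAbove_range_mul_sub_integral hr (intervalIntegrable_add_rpow_sub_two_mul hp _)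
    (fun s hs ↦ mul_nonneg (rpow_nonneg (by linarith) _) hs)
    ((tendsto_add_rpow_sub_two_mul_atTop hb hp).eventually_ge_atTop r)

theorem stmt18_general (δ pm pp : ℝ) (hδ : 0 ≤ δ) (hpm : 1 < pm) :
    ∃ c : ℝ, 0 < c ∧ ∀ p : ℝ, pm ≤ p → p ≤ pp → ∀ a : ℝ, 0 ≤ a →
      ∀ lam : ℝ, 0 ≤ lam → lam ≤ 1 → ∀ r : ℝ, 0 ≤ r →
        fconj (phiShift δ p a) (lam * r) ≤
          c * lam ^ (min 2 (p / (p - 1))) * fconj (phiShift δ p a) r := by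
  refine ⟨1, one_pos, fun p hpmp _ a ha lam hlam₀ hlam₁ r hr ↦ ?_⟩
  have hp : 1 < p := hpm.trans_le hpmp
  have hb : 0 ≤ δ + a := add_nonneg hδ ha
  rw [one_mul]
  rcases hlam₀.eq_or_lt with rfl | hlam₀
  · rw [zero_mul, zero_rpow (lt_min two_pos (div_pos (by linarith) (by linarith))).ne', zero_mul]
    exact fconj_zero_nonpos fun t ht ↦ phiShift_nonneg_s18 hb ht
  · rw [min_two_div_sub_one_eq hp]
    exact fconj_mul_le_rpow_of_growth (lt_max_of_lt_left one_lt_two)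
      (fun θ t hθ ht ↦ phiShift_mul_le hb hp hθ ht) (bddAbove_range_mul_sub_phiShift hb hp hr)
      hlam₀ hlam₁

theorem stmt18 (δ pm pp : ℝ) (hδ : 0 ≤ δ) (hpm : 1 < pm) (hpmpp : pm ≤ pp) :
    ∃ c : ℝ, 0 < c ∧ ∀ p : ℝ, pm ≤ p → p ≤ pp → ∀ a : ℝ, 0 ≤ a →
      ∀ lam : ℝ, 0 ≤ lam → lam ≤ 1 → ∀ r : ℝ, 0 ≤ r →
        fconj (phiShift δ p a) (lam * r) ≤
          c * lam ^ (min 2 (p / (p - 1))) * fconj (phiShift δ p a) r :=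
  stmt18_general δ pm pp hδ hpm
end

section
/- Let δ ≥ 0 and 2 ≤ p ≤ p⁺ < ∞. There exists a constant c > 0, depending only on p⁺ and δ, such that for every shift a ≥ 0 with δ + a > 0, every λ ∈ [0,1] and every r ≥ 0: ((φ_p)_a)*(λ r) ≤ c · (δ + a)^{2−p} · λ² r². -/
open MeasureTheory

lemma phiShift_lb (δ p a : ℝ) (hp : 2 ≤ p) (hδa : 0 < δ + a) (s : ℝ) (hs : 0 ≤ s) :
    (δ + a) ^ (p - 2) * s ^ 2 / 2 ≤ phiShift δ p a s := by
  set K := (δ + a) ^ (p - 2) with hK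
  have hKpos : 0 < K := Real.rpow_pos_of_pos hδa _
  have hint : (∫ t in (0:ℝ)..s, K * t) = K * s ^ 2 / 2 := by
    rw [intervalIntegral.integral_const_mul, integral_id]
    ring
  rw [phiShift, ← hint]
  have hcont : ContinuousOn (fun t : ℝ => (δ + a + t) ^ (p - 2) * t) (Set.Icc 0 s) := by
    apply ContinuousOn.mul _ continuousOn_id
    apply ContinuousOn.rpow_const (by fun_prop)
    intro t ht
    exact Or.inl (by nlinarith [ht.1])
  apply intervalIntegral.integral_mono_on hs
  · exact (continuousOn_const.mul continuousOn_id).intervalIntegrable_of_Icc hs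
  · exact hcont.intervalIntegrable_of_Icc hs
  · intro t ht
    have ht0 : 0 ≤ t := ht.1
    have : (δ + a) ^ (p - 2) ≤ (δ + a + t) ^ (p - 2) :=
      Real.rpow_le_rpow hδa.le (by linarith) (by linarith)
    exact mul_le_mul_of_nonneg_right this ht0

theorem stmt19 (δ pp : ℝ) (hδ : 0 ≤ δ) :
    ∃ c : ℝ, 0 < c ∧ ∀ p : ℝ, 2 ≤ p → p ≤ pp → ∀ a : ℝ, 0 ≤ a → 0 < δ + a →
      ∀ lam : ℝ, 0 ≤ lam → lam ≤ 1 → ∀ r : ℝ, 0 ≤ r →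
        fconj (phiShift δ p a) (lam * r) ≤
          c * ((δ + a) ^ (2 - p) * lam ^ 2 * r ^ 2) := by
  refine ⟨1/2, by norm_num, ?_⟩
  intro p hp2 hppp a ha hδa lam hlam0 hlam1 r hr
  set K := (δ + a) ^ (p - 2) with hKdef
  have hKpos : 0 < K := Real.rpow_pos_of_pos hδa _
  have hinv : (δ + a) ^ (2 - p) = K⁻¹ := by
    rw [hKdef, show (2 - p) = -(p - 2) by ring, Real.rpow_neg hδa.le]
  set x := lam * r with hx
  have hx0 : 0 ≤ x := mul_nonneg hlam0 hr
  have hgoal_eq : (1/2 : ℝ) * ((δ + a) ^ (2 - p) * lam ^ 2 * r ^ 2) = x ^ 2 / (2 * K) := by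
    rw [hinv]; field_simp [hx]; ring
  rw [hgoal_eq]
  apply ciSup_le
  intro s
  have hs0 : (0:ℝ) ≤ (s : ℝ) := s.coe_nonneg
  have hlb := phiShift_lb δ p a hp2 hδa s hs0
  have hq : x * (s : ℝ) - K * (s : ℝ) ^ 2 / 2 ≤ x ^ 2 / (2 * K) := by
    rw [le_div_iff₀ (by linarith)]
    nlinarith [sq_nonneg (K * (s : ℝ) - x)]
  calc x * (s : ℝ) - phiShift δ p a s ≤ x * s - K * (s:ℝ)^2 / 2 := by
        rw [← hKdef] at hlb; linarith
    _ ≤ x ^ 2 / (2 * K) := hq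
end
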